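/- arXiv:1810.06091 — 5 statements merged into one kernel-verified Lean document; each statement's English description precedes it below -/
import Mathlib

section
/- Let Λ be a multilinear functional on 4-tuples of finite-measure subsets of ℝ² defined by Λ(E) = ∫_{ℝ⁴} ∏_{i=1}^4 1_{E_i}(L_i(z)) dz, where each L_i : ℝ⁴ → ℝ² is linear and surjective. If Θ(e) denotes the supremum of Λ(E) over all 4-tuples with |E_i| = e_i, then Θ satisfies the superadditivity (triangle) inequality Θ(e + e') ≥ Θ(e) + Θ(e') for all e, e' ∈ (0,∞)⁴, provided there exists a vector v ∈ ℝ⁴ not in the nullspace of any L_i. -/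
/-!
With `S(E) = ⋂ᵢ Lᵢ⁻¹(Eᵢ)` we have `Λ(E) = |S(E)|`, so we work with the `ℝ≥0∞`-valued supremum
`eTheta` of `|S(E)|`. It is superadditive: truncate `E`, `E'` to bounded tuples and translate `E'`
by `L(r v)` with `r` so large that `E₀` and `E'₀ + L₀(r v)` are disjoint. Then `S(E)` and
`S(E' + L(r v)) = S(E') + r v` are disjoint subsets of `S(E ∪ (E' + L(r v)))`, and a far-away
rectangle pads each `Eᵢ ∪ (E'ᵢ + Lᵢ(r v))` up to measure `eᵢ + e'ᵢ`.

`Θ = eTheta.toReal`, matching the junk value `sSup = 0` of an unbounded set with `∞.toReal = 0`: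
if the `Lᵢ` have no common kernel, `S(E)` is bounded for bounded `E`, so an infinite `|S(E)|` is
approached by large finite values; otherwise `S(E)` is invariant under a line of translations and
`|S(E)| ∈ {0, ∞}`. Finally, scaling (`|δ Eᵢ| = δ² |Eᵢ|`, `|S(δ E)| = δ⁴ |S(E)|`) shows that if
`eTheta (e + e') = ∞` then also `eTheta e = eTheta e' = ∞`, and all three values of `Θ` vanish.
-/

open MeasureTheory Set

noncomputable section

abbrev R2 := ℝ × ℝ
abbrev R4 := (ℝ × ℝ) × ℝ × ℝ

/-- The multilinear functional Λ(E) = ∫_{ℝ⁴} ∏ᵢ 1_{Eᵢ}(Lᵢ z) dz. -/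
def Lam (L : Fin 4 → R4 →ₗ[ℝ] R2) (E : Fin 4 → Set R2) : ℝ :=
  ∫ z : R4, ∏ i, (E i).indicator (fun _ => (1 : ℝ)) (L i z)

/-- Θ(e) = sup of Λ(E) over 4-tuples with |Eᵢ| = eᵢ. -/
def Theta (L : Fin 4 → R4 →ₗ[ℝ] R2) (e : Fin 4 → ℝ) : ℝ :=
  sSup {t | ∃ E : Fin 4 → Set R2, (∀ i, MeasurableSet (E i)) ∧
    (∀ i, volume (E i) = ENNReal.ofReal (e i)) ∧ t = Lam L E}

open Bornology Metric Filter Topology ENNReal Pointwise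

section JointPreimage

variable {ι V W : Type*} [AddCommGroup V] [Module ℝ V] [AddCommGroup W] [Module ℝ W]

def jointPreimage (L : ι → V →ₗ[ℝ] W) (E : ι → Set W) : Set V :=
  ⋂ i, L i ⁻¹' E i

variable (L : ι → V →ₗ[ℝ] W)

@[simp]
lemma mem_jointPreimage {E : ι → Set W} {z : V} : z ∈ jointPreimage L E ↔ ∀ i, L i z ∈ E i :=
  mem_iInter

lemma jointPreimage_mono {E F : ι → Set W} (h : ∀ i, E i ⊆ F i) :
    jointPreimage L E ⊆ jointPreimage L F :=
  fun _ hz => (mem_jointPreimage L).2 fun i => h i ((mem_jointPreimage L).1 hz i)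

lemma disjoint_jointPreimage {E F : ι → Set W} (j : ι) (h : Disjoint (E j) (F j)) :
    Disjoint (jointPreimage L E) (jointPreimage L F) :=
  disjoint_left.2 fun _ hE hF => disjoint_left.1 h ((mem_jointPreimage L).1 hE j)
    ((mem_jointPreimage L).1 hF j)

lemma jointPreimage_preimage_add (E : ι → Set W) (w : V) :
    jointPreimage L (fun i => (· + L i w) ⁻¹' E i) = (· + w) ⁻¹' jointPreimage L E := by
  ext z; simp

lemma jointPreimage_smul (E : ι → Set W) {δ : ℝ} (hδ : δ ≠ 0) :
    jointPreimage L (fun i => δ • E i) = δ • jointPreimage L E := by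
  ext z; simp [mem_smul_set_iff_inv_smul_mem₀ hδ]

lemma add_smul_mem_jointPreimage_iff (E : ι → Set W) {n : V} (hn : ∀ i, L i n = 0) (t : ℝ)
    (z : V) :
    z + t • n ∈ jointPreimage L E ↔ z ∈ jointPreimage L E := by
  simp [hn]

end JointPreimage

section Normed

variable {ι V W : Type*} [NormedAddCommGroup V] [NormedSpace ℝ V] [NormedAddCommGroup W]
  [NormedSpace ℝ W]

lemma iUnion_jointPreimage_inter_closedBall [Finite ι] (L : ι → V →ₗ[ℝ] W) (E : ι → Set W) :
    ⋃ n : ℕ, jointPreimage L (fun i => E i ∩ closedBall 0 n) = jointPreimage L E := by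
  refine Subset.antisymm (iUnion_subset fun n => jointPreimage_mono L fun i => inter_subset_left) ?_
  intro z hz
  obtain ⟨C, hC⟩ := (finite_range fun i => ‖L i z‖).bddAbove
  obtain ⟨n, hn⟩ := exists_nat_ge C
  refine mem_iUnion.2 ⟨n, (mem_jointPreimage L).2 fun i => ⟨(mem_jointPreimage L).1 hz i, ?_⟩⟩
  rw [mem_closedBall_zero_iff]
  exact (hC (mem_range_self i)).trans hn

lemma isBounded_jointPreimage [Fintype ι] [FiniteDimensional ℝ V] (L : ι → V →ₗ[ℝ] W)
    (hL : Function.Injective (LinearMap.pi L)) {E : ι → Set W} (hE : ∀ i, IsBounded (E i)) :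
    IsBounded (jointPreimage L E) := by
  obtain ⟨K, -, hK⟩ := (LinearMap.pi L).exists_antilipschitzWith (LinearMap.ker_eq_bot.2 hL)
  convert hK.isBounded_preimage (IsBounded.pi hE)
  ext z; simp [LinearMap.pi_apply]

lemma exists_disjoint_preimage_add_smul {A B : Set W} (hA : IsBounded A) (hB : IsBounded B)
    {a : W} (ha : a ≠ 0) : ∃ r : ℝ, Disjoint A ((· + r • a) ⁻¹' B) := by
  obtain ⟨ρ, hρA, hρB⟩ : ∃ ρ, A ⊆ closedBall 0 ρ ∧ B ⊆ closedBall 0 ρ :=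
    (hA.union hB).subset_closedBall 0 |>.imp fun _ h =>
      ⟨subset_union_left.trans h, subset_union_right.trans h⟩
  refine ⟨(2 * ρ + 1) / ‖a‖, disjoint_left.2 fun x hxA hxB => ?_⟩
  have hx := mem_closedBall_zero_iff.1 (hρA hxA)
  have hxr := mem_closedBall_zero_iff.1 (hρB hxB)
  have hra : ‖((2 * ρ + 1) / ‖a‖) • a‖ = 2 * ρ + 1 := by
    rw [norm_smul, Real.norm_eq_abs, abs_div, abs_norm, div_mul_cancel₀ _ (norm_ne_zero_iff.2 ha)]
    exact abs_of_pos (by linarith [norm_nonneg x])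
  have := norm_sub_le (x + ((2 * ρ + 1) / ‖a‖) • a) x
  simp only [add_sub_cancel_left] at this
  linarith

end Normed

section Measure

variable {V : Type*} [NormedAddCommGroup V] [NormedSpace ℝ V] [MeasurableSpace V]
  (μ : Measure V)

lemma measurableSet_jointPreimage {ι W : Type*} [Countable ι] [FiniteDimensional ℝ V] [BorelSpace V]
    [NormedAddCommGroup W] [NormedSpace ℝ W] [MeasurableSpace W] [BorelSpace W] (L : ι → V →ₗ[ℝ] W)
    {E : ι → Set W} (hE : ∀ i, MeasurableSet (E i)) : MeasurableSet (jointPreimage L E) :=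
  MeasurableSet.iInter fun i => (hE i).preimage (L i).continuous_of_finiteDimensional.measurable

lemma measure_jointPreimage_eq_iSup {ι W : Type*} [Finite ι] [NormedAddCommGroup W]
    [NormedSpace ℝ W] (L : ι → V →ₗ[ℝ] W) (E : ι → Set W) :
    μ (jointPreimage L E) = ⨆ n : ℕ, μ (jointPreimage L (fun i => E i ∩ closedBall 0 n)) := by
  rw [← iUnion_jointPreimage_inter_closedBall]
  refine Monotone.measure_iUnion fun m n hmn => jointPreimage_mono L fun i => ?_
  exact inter_subset_inter_right _ (closedBall_subset_closedBall (by exact_mod_cast hmn))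

lemma measure_eq_zero_or_top_of_add_smul_mem_iff [BorelSpace V] [μ.IsAddRightInvariant]
    {S : Set V} (hS : MeasurableSet S) {n : V} (hn : n ≠ 0)
    (hinv : ∀ (t : ℝ) (z : V), z + t • n ∈ S ↔ z ∈ S) : μ S = 0 ∨ μ S = ∞ := by
  obtain ⟨g, -, hgn⟩ := exists_dual_vector ℝ n (norm_ne_zero_iff.2 hn)
  set φ : StrongDual ℝ V := ‖n‖⁻¹ • g
  have hφn : φ n = 1 := by simp [φ, hgn, hn]
  set slab : ℤ → Set V := fun k => S ∩ (fun z => ⌊φ z⌋) ⁻¹' {k}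
  have hslab : ∀ k : ℤ, slab k = (· + (-(k : ℝ)) • n) ⁻¹' slab 0 := by
    intro k; ext z
    simp only [slab, mem_inter_iff, mem_preimage, mem_singleton_iff, hinv, map_add, map_smul, hφn]
    simp [Int.floor_add_intCast, ← Int.cast_neg, add_neg_eq_zero]
  have hmeas : ∀ k, MeasurableSet (slab k) := fun k =>
    hS.inter (Int.measurable_floor.comp φ.measurable (measurableSet_singleton k))
  have hS_eq : μ S = ∑' _ : ℤ, μ (slab 0) := by
    have hcover : ⋃ k : ℤ, slab k = S := by
      ext z; simp [slab]
    rw [← hcover, measure_iUnion _ hmeas]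
    · exact tsum_congr fun k => by rw [hslab k, measure_preimage_add_right]
    · exact fun k l hkl => disjoint_left.2 fun z hk hl => hkl (hk.2.symm.trans hl.2)
  rcases eq_or_ne (μ (slab 0)) 0 with h0 | h0
  · simp [hS_eq, h0]
  · exact Or.inr (hS_eq.trans (ENNReal.tsum_const_eq_top_of_ne_zero h0))

end Measure

instance : (volume : Measure R4).IsAddHaarMeasure :=
  Measure.volume_eq_prod R2 (ℝ × ℝ) ▸ Measure.prod.instIsAddHaarMeasure volume volume

lemma exists_isBounded_superset_volume_eq {F : Set R2} (hF : MeasurableSet F) (hFb : IsBounded F)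
    {m : ℝ≥0∞} (hm : m ≠ ∞) (hFm : volume F ≤ m) :
    ∃ G, F ⊆ G ∧ MeasurableSet G ∧ IsBounded G ∧ volume G = m := by
  set P : Set R2 := Ioo 0 (m - volume F).toReal ×ˢ Ioo 0 1
  have hPb : IsBounded P := (isBounded_Ioo _ _).prod (isBounded_Ioo _ _)
  obtain ⟨r, hr⟩ := exists_disjoint_preimage_add_smul hFb hPb (a := ((1 : ℝ), (0 : ℝ))) (by simp)
  have hP : MeasurableSet P := measurableSet_Ioo.prod measurableSet_Ioo
  refine ⟨F ∪ (· + r • ((1 : ℝ), (0 : ℝ))) ⁻¹' P, subset_union_left,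
    hF.union (hP.preimage (measurable_add_const _)), hFb.union ?_, ?_⟩
  · exact (IsometryEquiv.addRight _).isometry.antilipschitz.isBounded_preimage hPb
  · have hPm : volume P = m - volume F := by
      conv_lhs => rw [Measure.volume_eq_prod, Measure.prod_prod, Real.volume_Ioo, Real.volume_Ioo]
      simp [ENNReal.ofReal_toReal (ne_top_of_le_ne_top hm tsub_le_self)]
    rw [measure_union hr (hP.preimage (measurable_add_const _)), measure_preimage_add_right, hPm,
      add_tsub_cancel_of_le hFm]

section Theta

variable (L : Fin 4 → R4 →ₗ[ℝ] R2)

lemma lam_eq_measureReal {E : Fin 4 → Set R2} (hE : ∀ i, MeasurableSet (E i)) :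
    Lam L E = volume.real (jointPreimage L E) := by
  rw [Lam, ← integral_indicator_one (measurableSet_jointPreimage L hE)]
  congr 1; ext z
  have := prod_indicator_const_apply Finset.univ (fun i => L i ⁻¹' E i) (1 : R4 → ℝ) z
  simp only [Finset.mem_univ, iInter_true, one_pow] at this
  exact this

def Admissible (c : Fin 4 → ℝ) : Set (Fin 4 → Set R2) :=
  {E | (∀ i, MeasurableSet (E i)) ∧ ∀ i, volume (E i) = ENNReal.ofReal (c i)}

def eTheta (c : Fin 4 → ℝ) : ℝ≥0∞ :=
  ⨆ E : Admissible c, volume (jointPreimage L E)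

lemma theta_eq_iSup (c : Fin 4 → ℝ) : Theta L c = ⨆ E : Admissible c, Lam L E := by
  rw [Theta, iSup]
  congr 1
  ext t
  exact ⟨fun ⟨E, hE, hEc, ht⟩ => ⟨⟨E, hE, hEc⟩, ht.symm⟩,
    fun ⟨E, ht⟩ => ⟨E, E.2.1, E.2.2, ht.symm⟩⟩

lemma exists_admissible_superset {c : Fin 4 → ℝ} {F : Fin 4 → Set R2}
    (hF : ∀ i, MeasurableSet (F i)) (hFb : ∀ i, IsBounded (F i))
    (hFc : ∀ i, volume (F i) ≤ ENNReal.ofReal (c i)) :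
    ∃ G ∈ Admissible c, (∀ i, F i ⊆ G i) ∧ ∀ i, IsBounded (G i) := by
  choose G hFG hG hGb hGc using fun i =>
    exists_isBounded_superset_volume_eq (hF i) (hFb i) ofReal_ne_top (hFc i)
  exact ⟨G, ⟨hG, hGc⟩, hFG, hGb⟩

lemma nonempty_admissible (c : Fin 4 → ℝ) : Nonempty (Admissible c) :=
  have ⟨G, hG, _⟩ := exists_admissible_superset (c := c) (fun _ => MeasurableSet.empty)
    (fun _ => isBounded_empty) (fun _ => by simp)
  ⟨⟨G, hG⟩⟩

lemma measure_jointPreimage_le_eTheta {c : Fin 4 → ℝ} {F : Fin 4 → Set R2}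
    (hF : ∀ i, MeasurableSet (F i)) (hFc : ∀ i, volume (F i) ≤ ENNReal.ofReal (c i)) :
    volume (jointPreimage L F) ≤ eTheta L c := by
  rw [measure_jointPreimage_eq_iSup]
  refine iSup_le fun n => ?_
  obtain ⟨G, hG, hFG, -⟩ := exists_admissible_superset
    (fun i => (hF i).inter measurableSet_closedBall)
    (fun i => isBounded_closedBall.subset inter_subset_right)
    (fun i => (measure_mono inter_subset_left).trans (hFc i))
  exact (measure_mono (jointPreimage_mono L hFG)).trans
    (le_iSup (fun E : Admissible c => volume (jointPreimage L E)) ⟨G, hG⟩)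

lemma add_le_eTheta_of_isBounded {j : Fin 4} {v : R4} (hv : L j v ≠ 0) {e e' : Fin 4 → ℝ}
    (he : ∀ i, 0 ≤ e i) (he' : ∀ i, 0 ≤ e' i) {F F' : Fin 4 → Set R2}
    (hF : ∀ i, MeasurableSet (F i)) (hF' : ∀ i, MeasurableSet (F' i))
    (hFb : IsBounded (F j)) (hF'b : IsBounded (F' j))
    (hFe : ∀ i, volume (F i) ≤ ENNReal.ofReal (e i))
    (hF'e : ∀ i, volume (F' i) ≤ ENNReal.ofReal (e' i)) :
    volume (jointPreimage L F) + volume (jointPreimage L F') ≤ eTheta L (e + e') := by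
  obtain ⟨r, hr⟩ := exists_disjoint_preimage_add_smul hFb hF'b hv
  set T : Fin 4 → Set R2 := fun i => (· + L i (r • v)) ⁻¹' F' i
  have hT : ∀ i, MeasurableSet (T i) := fun i => (hF' i).preimage (measurable_add_const _)
  have hdisj : Disjoint (jointPreimage L F) (jointPreimage L T) :=
    disjoint_jointPreimage L j (by simpa [T] using hr)
  calc volume (jointPreimage L F) + volume (jointPreimage L F')
      = volume (jointPreimage L F ∪ jointPreimage L T) := by
        rw [measure_union hdisj (measurableSet_jointPreimage L hT), jointPreimage_preimage_add,
          measure_preimage_add_right]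
    _ ≤ volume (jointPreimage L fun i => F i ∪ T i) :=
        measure_mono (union_subset (jointPreimage_mono L fun i => subset_union_left)
          (jointPreimage_mono L fun i => subset_union_right))
    _ ≤ eTheta L (e + e') := by
        refine measure_jointPreimage_le_eTheta L (fun i => (hF i).union (hT i)) fun i => ?_
        calc volume (F i ∪ T i) ≤ volume (F i) + volume (F' i) :=
              (measure_union_le _ _).trans_eq (by rw [measure_preimage_add_right])
          _ ≤ ENNReal.ofReal (e i) + ENNReal.ofReal (e' i) := add_le_add (hFe i) (hF'e i)
          _ = ENNReal.ofReal (e i + e' i) := (ofReal_add (he i) (he' i)).symm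

lemma eTheta_add_le {j : Fin 4} {v : R4} (hv : L j v ≠ 0) {e e' : Fin 4 → ℝ}
    (he : ∀ i, 0 ≤ e i) (he' : ∀ i, 0 ≤ e' i) :
    eTheta L e + eTheta L e' ≤ eTheta L (e + e') := by
  have := nonempty_admissible e
  have := nonempty_admissible e'
  refine ENNReal.iSup_add_iSup_le fun E E' => ?_
  rw [measure_jointPreimage_eq_iSup, measure_jointPreimage_eq_iSup]
  refine ENNReal.iSup_add_iSup_le fun m n => add_le_eTheta_of_isBounded L hv he he'
    (fun i => (E.2.1 i).inter measurableSet_closedBall)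
    (fun i => (E'.2.1 i).inter measurableSet_closedBall)
    (isBounded_closedBall.subset inter_subset_right)
    (isBounded_closedBall.subset inter_subset_right)
    (fun i => (measure_mono inter_subset_left).trans_eq (E.2.2 i))
    (fun i => (measure_mono inter_subset_left).trans_eq (E'.2.2 i))

lemma ofReal_pow_mul_eTheta_le {c c' : Fin 4 → ℝ} {δ : ℝ} (hδ : 0 < δ)
    (hc : ∀ i, δ ^ 2 * c' i ≤ c i) :
    ENNReal.ofReal (δ ^ 4) * eTheta L c' ≤ eTheta L c := by
  rw [eTheta, ENNReal.mul_iSup]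
  refine iSup_le fun E => ?_
  have hR4 : volume (δ • jointPreimage L E) =
      ENNReal.ofReal (δ ^ 4) * volume (jointPreimage L E) := by
    simp [Measure.addHaar_smul_of_nonneg volume hδ.le]
  rw [← hR4, ← jointPreimage_smul L _ hδ.ne']
  refine measure_jointPreimage_le_eTheta L (fun i => (E.2.1 i).const_smul₀ δ) fun i => ?_
  rw [Measure.addHaar_smul_of_nonneg volume hδ.le, E.2.2 i, ← ofReal_mul (by positivity)]
  simpa using ENNReal.ofReal_le_ofReal (hc i)

lemma eTheta_eq_top_of_eq_top {c c' : Fin 4 → ℝ} (hc : ∀ i, 0 < c i) (h : eTheta L c' = ∞) :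
    eTheta L c = ∞ := by
  have hsmall : ∀ᶠ m in 𝓝[>] (0 : ℝ), ∀ i, m * c' i ≤ c i := by
    refine eventually_all.2 fun i => ?_
    have : Tendsto (fun m : ℝ => m * c' i) (𝓝 0) (𝓝 0) := by
      simpa using (tendsto_id (x := 𝓝 (0 : ℝ))).mul_const (c' i)
    exact (this.mono_left nhdsWithin_le_nhds).eventually (eventually_le_nhds (hc i))
  obtain ⟨m, hmc, hm⟩ := (hsmall.and self_mem_nhdsWithin).exists
  have hδ : 0 < √m := Real.sqrt_pos.2 hm
  have hδ2 : √m ^ 2 = m := Real.sq_sqrt hm.le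
  refine eq_top_iff.2 (le_trans ?_ (ofReal_pow_mul_eTheta_le L hδ fun i => hδ2 ▸ hmc i))
  rw [h, ENNReal.mul_top (by simpa using hδ)]

lemma lam_eq_zero_of_mem_ker {n : R4} (hn : n ≠ 0) (hker : ∀ i, L i n = 0)
    {E : Fin 4 → Set R2} (hE : ∀ i, MeasurableSet (E i)) : Lam L E = 0 := by
  rw [lam_eq_measureReal L hE, measureReal_def]
  rcases measure_eq_zero_or_top_of_add_smul_mem_iff volume (measurableSet_jointPreimage L hE) hn
    (add_smul_mem_jointPreimage_iff L E hker) with h | h <;> simp [h]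

lemma not_bddAbove_range_lam_of_measure_eq_top {c : Fin 4 → ℝ}
    (hL : Function.Injective (LinearMap.pi L))
    {E : Fin 4 → Set R2} (hE : E ∈ Admissible c) (htop : volume (jointPreimage L E) = ∞) :
    ¬ BddAbove (range fun E : Admissible c => Lam L E) := by
  refine not_bddAbove_iff.2 fun M => ?_
  rw [measure_jointPreimage_eq_iSup] at htop
  obtain ⟨n, hn⟩ := lt_iSup_iff.1 (htop ▸ ofReal_lt_top : ENNReal.ofReal M < _)
  obtain ⟨G, hG, hFG, hGb⟩ := exists_admissible_superset (F := fun i => E i ∩ closedBall 0 n)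
    (fun i => (hE.1 i).inter measurableSet_closedBall)
    (fun i => isBounded_closedBall.subset inter_subset_right)
    (fun i => (measure_mono inter_subset_left).trans_eq (hE.2 i))
  refine ⟨Lam L G, ⟨⟨G, hG⟩, rfl⟩, ?_⟩
  rw [lam_eq_measureReal L hG.1, measureReal_def]
  calc M ≤ (ENNReal.ofReal M).toReal := by rw [ENNReal.toReal_ofReal']; exact le_max_left _ _
    _ < (volume (jointPreimage L G)).toReal :=
      ENNReal.toReal_strict_mono (isBounded_jointPreimage L hL hGb).measure_lt_top.ne
        (hn.trans_le (measure_mono (jointPreimage_mono L hFG)))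

lemma theta_eq_toReal_eTheta (c : Fin 4 → ℝ) : Theta L c = (eTheta L c).toReal := by
  rw [theta_eq_iSup, eTheta]
  by_cases hfin : ∀ E : Admissible c, volume (jointPreimage L E) ≠ ∞
  · rw [ENNReal.toReal_iSup hfin]
    exact iSup_congr fun E => lam_eq_measureReal L E.2.1
  simp only [not_forall, not_not] at hfin
  obtain ⟨E, hE⟩ := hfin
  have htop : ⨆ E : Admissible c, volume (jointPreimage L E) = ∞ :=
    eq_top_iff.2 (hE ▸ le_iSup (fun E : Admissible c => volume (jointPreimage L E)) E)
  rw [htop, ENNReal.toReal_top]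
  by_cases hL : Function.Injective (LinearMap.pi L)
  · exact Real.iSup_of_not_bddAbove (not_bddAbove_range_lam_of_measure_eq_top L hL E.2 hE)
  · obtain ⟨n, hn0, hn⟩ : ∃ n, LinearMap.pi L n = 0 ∧ n ≠ 0 := by
      by_contra! h
      exact hL (LinearMap.ker_eq_bot.1 (LinearMap.ker_eq_bot'.2 h))
    rw [iSup_congr fun E : Admissible c =>
      lam_eq_zero_of_mem_ker L hn (fun i => congr_fun hn0 i) E.2.1]
    exact Real.iSup_const_zero

end Theta

theorem theta_superadditive_general (L : Fin 4 → R4 →ₗ[ℝ] R2)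
    (v : R4) (hv : ∀ i, L i v ≠ 0)
    (e e' : Fin 4 → ℝ) (he : ∀ i, 0 < e i) (he' : ∀ i, 0 < e' i) :
    Theta L e + Theta L e' ≤ Theta L (e + e') := by
  simp only [theta_eq_toReal_eTheta]
  rcases eq_or_ne (eTheta L (e + e')) ∞ with htop | hfin
  · rw [eTheta_eq_top_of_eq_top L he htop, eTheta_eq_top_of_eq_top L he' htop, htop]
    simp
  · have hadd := eTheta_add_le L (hv 0) (fun i => (he i).le) (fun i => (he' i).le)
    rw [← ENNReal.toReal_add (ne_top_of_le_ne_top hfin (le_self_add.trans hadd))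
      (ne_top_of_le_ne_top hfin (le_add_self.trans hadd))]
    exact ENNReal.toReal_mono hfin hadd

/-- Superadditivity (triangle inequality) of Θ. -/
theorem theta_superadditive (L : Fin 4 → R4 →ₗ[ℝ] R2)
    (hsurj : ∀ i, Function.Surjective (L i))
    (v : R4) (hv : ∀ i, L i v ≠ 0)
    (e e' : Fin 4 → ℝ) (he : ∀ i, 0 < e i) (he' : ∀ i, 0 < e' i) :
    Theta L e + Theta L e' ≤ Theta L (e + e') :=
  theta_superadditive_general L v hv e e' he he'

end
end

section
/- Let R_j = I_j × I'_j ⊂ ℝ² be rectangles with sides parallel to the coordinate axes, for j = 1,2,3,4. Suppose each L_n : ℝ⁴ → ℝ² has the split form L_n(x₁,x₂,y₁,y₂) = (L_n¹(x₁,x₂), L_n²(y₁,y₂)) and the family is nondegenerate. Then for any permutation (i,j,k,l) of (1,2,3,4), Λ(1_{R₁},1_{R₂},1_{R₃},1_{R₄}) ≤ C · |I'_k| · |I'_l| · |I'_i|⁻¹ · |I'_j|⁻¹ · |R_i| · |R_j|, where C depends only on the maps L_n. -/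
open MeasureTheory Set

noncomputable section

/-- Λ for maps satisfying the partial symmetry hypothesis
L_n(x, y) = (L¹_n x, L²_n y). -/
def LamPS (L1 L2 : Fin 4 → R2 →ₗ[ℝ] ℝ) (E : Fin 4 → Set R2) : ℝ :=
  ∫ z : R2 × R2, ∏ n, (E n).indicator (fun _ => (1 : ℝ)) (L1 n z.1, L2 n z.2)

/-!
Bounding the indicator of `R_n` by that of `I_n` in the `x`-variables for `n = i, j` and by that
of `I'_n` in the `y`-variables for `n = k, l`, `Λ` is at most the area of the parallelogram
`{x | (L¹_i x, L¹_j x) ∈ I_i × I_j}` times that of `{y | (L²_k y, L²_l y) ∈ I'_k × I'_l}`, i.e.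
`|I_i| |I_j| |I'_k| |I'_l|` divided by the two (nonzero) Jacobians. The right-hand side of the
theorem is the same product of lengths, and `C` is the sum of all inverse Jacobians.
-/

theorem LinearMap.det_ne_zero_of_bijective {K M : Type*} [Field K] [AddCommGroup M]
    [Module K M] {f : M →ₗ[K] M} (hf : Function.Bijective f) : LinearMap.det f ≠ 0 :=
  (LinearEquiv.ofBijective f hf).isUnit_det'.ne_zero

section Parallelogram

variable {T : R2 →ₗ[ℝ] R2} {a b c d : ℝ}

theorem volume_preimage_Icc_prod_Icc_lt_top (hT : LinearMap.det T ≠ 0) :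
    volume (T ⁻¹' (Icc a b ×ˢ Icc c d)) < ⊤ := by
  rw [Measure.addHaar_preimage_linearMap volume hT]
  exact ENNReal.mul_lt_top ENNReal.ofReal_lt_top
    (isCompact_Icc.prod isCompact_Icc).measure_lt_top

theorem volume_real_preimage_Icc_prod_Icc (hT : LinearMap.det T ≠ 0) (hab : a ≤ b) (hcd : c ≤ d) :
    volume.real (T ⁻¹' (Icc a b ×ˢ Icc c d)) = |(LinearMap.det T)⁻¹| * ((b - a) * (d - c)) := by
  rw [measureReal_def, Measure.addHaar_preimage_linearMap volume hT, ENNReal.toReal_mul,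
    ENNReal.toReal_ofReal (abs_nonneg _), ← measureReal_def, Measure.volume_eq_prod,
    measureReal_prod_prod, Real.volume_real_Icc_of_le hab, Real.volume_real_Icc_of_le hcd]

end Parallelogram

theorem lamPS_eq_volume_real (L1 L2 : Fin 4 → R2 →ₗ[ℝ] ℝ) {E : Fin 4 → Set R2}
    (hE : ∀ n, MeasurableSet (E n)) :
    LamPS L1 L2 E = volume.real {z : R2 × R2 | ∀ n, (L1 n z.1, L2 n z.2) ∈ E n} := by
  have hmeas : MeasurableSet {z : R2 × R2 | ∀ n, (L1 n z.1, L2 n z.2) ∈ E n} := by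
    simp only [ofPred_forall]
    exact MeasurableSet.iInter fun n => (hE n).preimage (by fun_prop)
  rw [LamPS, ← integral_indicator_one hmeas]
  congr 1 with z
  classical
  simp only [indicator_apply, mem_ofPred_eq]
  split_ifs with hz
  · exact Finset.prod_eq_one fun n _ => if_pos (hz n)
  · obtain ⟨n, hn⟩ := not_forall.1 hz
    exact Finset.prod_eq_zero (Finset.mem_univ n) (if_neg hn)

theorem lamPS_rectangles_le (L1 L2 : Fin 4 → R2 →ₗ[ℝ] ℝ) {a b a' b' : Fin 4 → ℝ}
    (hab : ∀ n, a n ≤ b n) (hab' : ∀ n, a' n ≤ b' n) {i j k l : Fin 4}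
    (hij : Function.Bijective (fun x : R2 => (L1 i x, L1 j x)))
    (hkl : Function.Bijective (fun y : R2 => (L2 k y, L2 l y))) :
    LamPS L1 L2 (fun n => Icc (a n) (b n) ×ˢ Icc (a' n) (b' n)) ≤
      |(LinearMap.det ((L1 i).prod (L1 j)))⁻¹| * |(LinearMap.det ((L2 k).prod (L2 l)))⁻¹| *
        ((b i - a i) * (b j - a j) * ((b' k - a' k) * (b' l - a' l))) := by
  have hdet1 := LinearMap.det_ne_zero_of_bijective (f := (L1 i).prod (L1 j)) hij
  have hdet2 := LinearMap.det_ne_zero_of_bijective (f := (L2 k).prod (L2 l)) hkl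
  set P := (L1 i).prod (L1 j) ⁻¹' (Icc (a i) (b i) ×ˢ Icc (a j) (b j))
  set Q := (L2 k).prod (L2 l) ⁻¹' (Icc (a' k) (b' k) ×ˢ Icc (a' l) (b' l))
  have hsub : {z : R2 × R2 | ∀ n, (L1 n z.1, L2 n z.2) ∈ Icc (a n) (b n) ×ˢ Icc (a' n) (b' n)} ⊆
      P ×ˢ Q := fun z hz =>
    ⟨⟨(hz i).1, (hz j).1⟩, ⟨(hz k).2, (hz l).2⟩⟩
  have hfin : volume (P ×ˢ Q) ≠ ⊤ := by
    rw [Measure.volume_eq_prod, Measure.prod_prod]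
    exact ENNReal.mul_ne_top (volume_preimage_Icc_prod_Icc_lt_top hdet1).ne
      (volume_preimage_Icc_prod_Icc_lt_top hdet2).ne
  calc LamPS L1 L2 (fun n => Icc (a n) (b n) ×ˢ Icc (a' n) (b' n))
      ≤ volume.real (P ×ˢ Q) := by
        rw [lamPS_eq_volume_real L1 L2 fun n => measurableSet_Icc.prod measurableSet_Icc]
        exact measureReal_mono hsub hfin
    _ = volume.real P * volume.real Q := by
        rw [Measure.volume_eq_prod, measureReal_prod_prod]
    _ = _ := by
        rw [volume_real_preimage_Icc_prod_Icc hdet1 (hab i) (hab j),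
          volume_real_preimage_Icc_prod_Icc hdet2 (hab' k) (hab' l)]
        ring

def sumAbsInvDet (L : Fin 4 → R2 →ₗ[ℝ] ℝ) : ℝ :=
  ∑ p : Fin 4 × Fin 4, |(LinearMap.det ((L p.1).prod (L p.2)))⁻¹|

theorem sumAbsInvDet_nonneg (L : Fin 4 → R2 →ₗ[ℝ] ℝ) : 0 ≤ sumAbsInvDet L :=
  Finset.sum_nonneg fun _ _ => abs_nonneg _

theorem abs_inv_det_prod_le_sumAbsInvDet (L : Fin 4 → R2 →ₗ[ℝ] ℝ) (i j : Fin 4) :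
    |(LinearMap.det ((L i).prod (L j)))⁻¹| ≤ sumAbsInvDet L :=
  Finset.single_le_sum (f := fun p : Fin 4 × Fin 4 => |(LinearMap.det ((L p.1).prod (L p.2)))⁻¹|)
    (fun _ _ => abs_nonneg _) (Finset.mem_univ (i, j))

theorem lamPS_rectangles_le_sumAbsInvDet (L1 L2 : Fin 4 → R2 →ₗ[ℝ] ℝ)
    (hnd : ∀ i j, i ≠ j →
      Function.Bijective (fun x : R2 => (L1 i x, L1 j x)) ∧
      Function.Bijective (fun y : R2 => (L2 i y, L2 j y)))
    {a b a' b' : Fin 4 → ℝ} (hab : ∀ n, a n ≤ b n) (hab' : ∀ n, a' n ≤ b' n)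
    {i j k l : Fin 4} (hij : i ≠ j) (hkl : k ≠ l) :
    LamPS L1 L2 (fun n => Icc (a n) (b n) ×ˢ Icc (a' n) (b' n)) ≤
      sumAbsInvDet L1 * sumAbsInvDet L2 *
        ((b i - a i) * (b j - a j) * ((b' k - a' k) * (b' l - a' l))) := by
  have hwidths : 0 ≤ (b i - a i) * (b j - a j) * ((b' k - a' k) * (b' l - a' l)) :=
    mul_nonneg (mul_nonneg (sub_nonneg.2 (hab i)) (sub_nonneg.2 (hab j)))
      (mul_nonneg (sub_nonneg.2 (hab' k)) (sub_nonneg.2 (hab' l)))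
  refine (lamPS_rectangles_le L1 L2 hab hab' (hnd i j hij).1 (hnd k l hkl).2).trans ?_
  gcongr
  · exact sumAbsInvDet_nonneg L1
  · exact abs_inv_det_prod_le_sumAbsInvDet L1 i j
  · exact abs_inv_det_prod_le_sumAbsInvDet L2 k l

theorem lam_rectangle_bound_general (L1 L2 : Fin 4 → R2 →ₗ[ℝ] ℝ)
    (hnd : ∀ i j, i ≠ j →
      Function.Bijective (fun x : R2 => (L1 i x, L1 j x)) ∧
      Function.Bijective (fun y : R2 => (L2 i y, L2 j y))) :
    ∃ C : ℝ, 0 ≤ C ∧ ∀ a b a' b' : Fin 4 → ℝ,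
      (∀ n, a n ≤ b n) → (∀ n, a' n ≤ b' n) →
      ∀ σ : Equiv.Perm (Fin 4),
        LamPS L1 L2 (fun n => Icc (a n) (b n) ×ˢ Icc (a' n) (b' n)) ≤
          C * (b' (σ 2) - a' (σ 2)) * (b' (σ 3) - a' (σ 3)) *
            (b' (σ 0) - a' (σ 0))⁻¹ * (b' (σ 1) - a' (σ 1))⁻¹ *
            ((b (σ 0) - a (σ 0)) * (b' (σ 0) - a' (σ 0))) *
            ((b (σ 1) - a (σ 1)) * (b' (σ 1) - a' (σ 1))) := by
  refine ⟨sumAbsInvDet L1 * sumAbsInvDet L2,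
    mul_nonneg (sumAbsInvDet_nonneg L1) (sumAbsInvDet_nonneg L2), ?_⟩
  intro a b a' b' hab hab' σ
  have h01 : σ 0 ≠ σ 1 := σ.injective.ne (by decide)
  have h23 : σ 2 ≠ σ 3 := σ.injective.ne (by decide)
  -- Since `0⁻¹ = 0`, the right-hand side vanishes with `|I'_i| |I'_j|`; then so does the bound
  -- obtained with `k, l = i, j`.
  by_cases hw : (b' (σ 0) - a' (σ 0)) * (b' (σ 1) - a' (σ 1)) = 0
  · calc _ ≤ _ := lamPS_rectangles_le_sumAbsInvDet L1 L2 hnd hab hab' h01 h01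
      _ = 0 := by rw [hw, mul_zero, mul_zero]
      _ = _ := by rcases mul_eq_zero.1 hw with h | h <;> simp [h]
  · obtain ⟨h0, h1⟩ := mul_ne_zero_iff.1 hw
    calc _ ≤ _ := lamPS_rectangles_le_sumAbsInvDet L1 L2 hnd hab hab' h01 h23
      _ = _ := by field_simp

/-- Rectangle bound: for axis-parallel rectangles R_n = I_n × I'_n and any
permutation (i,j,k,l) of (1,2,3,4),
Λ(R₁,…,R₄) ≤ C |I'_k| |I'_l| |I'_i|⁻¹ |I'_j|⁻¹ |R_i| |R_j|. -/
theorem lam_rectangle_bound (L1 L2 : Fin 4 → R2 →ₗ[ℝ] ℝ)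
    (hsurj : ∀ n, Function.Surjective (L1 n) ∧ Function.Surjective (L2 n))
    (hnd : ∀ i j, i ≠ j →
      Function.Bijective (fun x : R2 => (L1 i x, L1 j x)) ∧
      Function.Bijective (fun y : R2 => (L2 i y, L2 j y))) :
    ∃ C : ℝ, 0 ≤ C ∧ ∀ a b a' b' : Fin 4 → ℝ,
      (∀ n, a n ≤ b n) → (∀ n, a' n ≤ b' n) →
      ∀ σ : Equiv.Perm (Fin 4),
        LamPS L1 L2 (fun n => Icc (a n) (b n) ×ˢ Icc (a' n) (b' n)) ≤
          C * (b' (σ 2) - a' (σ 2)) * (b' (σ 3) - a' (σ 3)) *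
            (b' (σ 0) - a' (σ 0))⁻¹ * (b' (σ 1) - a' (σ 1))⁻¹ *
            ((b (σ 0) - a (σ 0)) * (b' (σ 0) - a' (σ 0))) *
            ((b (σ 1) - a (σ 1)) * (b' (σ 1) - a' (σ 1))) :=
  lam_rectangle_bound_general L1 L2 hnd

end
end

section
/- Let E ⊂ ℝ² be a measurable set of finite measure that is Steiner symmetric with respect to both coordinate axes (E = E† up to null sets). Then for any rectangle R centered at the origin with sides parallel to the coordinate axes, and any y ∈ ℝ², |(R + y) ∩ E| ≤ |R ∩ E|. -/
open MeasureTheory Set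

noncomputable section

/-- Vertical slice of E at abscissa x. -/
def vslice (E : Set R2) (x : ℝ) : Set ℝ := {t | (x, t) ∈ E}

/-- Horizontal slice of E at ordinate y. -/
def hslice (E : Set R2) (y : ℝ) : Set ℝ := {t | (t, y) ∈ E}

/-- Vertical Steiner symmetrization E^♯. -/
def steinerV (E : Set R2) : Set R2 :=
  {p | 0 < volume (vslice E p.1) ∧ |p.2| ≤ (volume (vslice E p.1)).toReal / 2}

/-- Horizontal Steiner symmetrization E^♭. -/
def steinerH (E : Set R2) : Set R2 :=
  {p | 0 < volume (hslice E p.2) ∧ |p.1| ≤ (volume (hslice E p.2)).toReal / 2}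

/-- Double Steiner symmetrization E† = (E^♯)^♭. -/
def dagger (E : Set R2) : Set R2 := steinerH (steinerV E)

/-!
On every line the slices of `E†` are intervals centred at `0`. In dimension one, the reflection
`x ↦ c - x` maps `[c - b, c + b] \ [-b, b]` into `[-b, b] \ [c - b, c + b]` and moves each point
closer to `0`, so a centred interval catches at least as much of such a set as any translate.
By Fubini the translated rectangle can then be moved back to the origin one coordinate at a time,
and `E` may be replaced by `E†`, from which it differs by a null set. That the vertical slices of
`E† = (E^♯)^♭` are centred intervals nested in `|t|` needs the horizontal slices of `E^♯` to be
nested and of finite measure away from height `0` (Chebyshev, since `|E| < ∞`).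
-/

/-- `0` is exempt: a vertical slice of `E†` misses `0` when the horizontal slice of `E^♯` at
height `0` has infinite measure, whose `toReal` is `0`. -/
def IsSymmDecreasing (A : Set ℝ) : Prop := ∀ t ∈ A, ∀ s, s ≠ 0 → |s| ≤ |t| → s ∈ A

theorem volume_preimage_sub_left (c : ℝ) (S : Set ℝ) :
    volume ((fun x => c - x) ⁻¹' S) = volume S :=
  (Measure.measurePreserving_sub_left volume c).measure_preimage_equiv
    (f := MeasurableEquiv.subLeft c) S

theorem IsSymmDecreasing.volume_Icc_add_inter_le {A : Set ℝ} (hA : IsSymmDecreasing A) (b c : ℝ) :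
    volume (Icc (-b + c) (b + c) ∩ A) ≤ volume (Icc (-b) b ∩ A) := by
  set I := Icc (-b + c) (b + c)
  set J := Icc (-b) b
  have hreflect : ((I ∩ A) \ J) \ {c} ⊆ (fun x => c - x) ⁻¹' ((J ∩ A) \ I) := by
    rintro x ⟨⟨⟨hxI, hxA⟩, hxJ⟩, hxc⟩
    have hJ : c - x ∈ J := by constructor <;> linarith [hxI.1, hxI.2]
    have hbx : b ≤ |x| := (not_le.1 fun h => hxJ (abs_le.1 h)).le
    refine ⟨⟨hJ, hA x hxA _ (sub_ne_zero.2 (Ne.symm hxc)) ((abs_le.2 hJ).trans hbx)⟩, fun hI => ?_⟩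
    exact hxJ ⟨by linarith [hI.2], by linarith [hI.1]⟩
  calc volume (I ∩ A) = volume (I ∩ A ∩ J) + volume ((I ∩ A) \ J) :=
        (measure_inter_add_sdiff _ measurableSet_Icc).symm
    _ ≤ volume (J ∩ A ∩ I) + volume ((J ∩ A) \ I) := by
        gcongr ?_ + ?_
        · exact measure_mono fun x ⟨⟨hI, hA⟩, hJ⟩ => ⟨⟨hJ, hA⟩, hI⟩
        · calc volume ((I ∩ A) \ J) = volume (((I ∩ A) \ J) \ {c}) :=
                (measure_sdiff_null (measure_singleton c)).symm
            _ ≤ volume ((fun x => c - x) ⁻¹' ((J ∩ A) \ I)) := measure_mono hreflect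
            _ = volume ((J ∩ A) \ I) := volume_preimage_sub_left c _
    _ = volume (J ∩ A) := measure_inter_add_sdiff _ measurableSet_Icc

theorem MeasurableSet.steinerV {E : Set R2} (hE : MeasurableSet E) :
    MeasurableSet (steinerV E) := by
  have hm : Measurable fun x => volume (vslice E x) := measurable_measure_prodMk_left hE
  exact (measurableSet_lt measurable_const (hm.comp measurable_fst)).inter
    (measurableSet_le measurable_snd.abs ((hm.comp measurable_fst).ennreal_toReal.div_const 2))

theorem MeasurableSet.steinerH {E : Set R2} (hE : MeasurableSet E) :
    MeasurableSet (steinerH E) := by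
  have hm : Measurable fun y => volume (hslice E y) := measurable_measure_prodMk_right hE
  exact (measurableSet_lt measurable_const (hm.comp measurable_snd)).inter
    (measurableSet_le measurable_fst.abs ((hm.comp measurable_snd).ennreal_toReal.div_const 2))

theorem isSymmDecreasing_hslice_steinerH (F : Set R2) (t : ℝ) :
    IsSymmDecreasing (hslice (steinerH F) t) :=
  fun _ hx _ _ hs => ⟨hx.1, hs.trans hx.2⟩

theorem hslice_steinerV_subset_of_abs_le (E : Set R2) {s t : ℝ} (hst : |s| ≤ |t|) :
    hslice (steinerV E) t ⊆ hslice (steinerV E) s :=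
  fun _ hx => ⟨hx.1, hst.trans hx.2⟩

theorem isSymmDecreasing_vslice_steinerH {F : Set R2}
    (hanti : ∀ s t, |s| ≤ |t| → hslice F t ⊆ hslice F s)
    (hfin : ∀ s, s ≠ 0 → volume (hslice F s) ≠ ⊤) (x : ℝ) :
    IsSymmDecreasing (vslice (steinerH F) x) := by
  intro t ht s hs hst
  have hle : volume (hslice F t) ≤ volume (hslice F s) := measure_mono (hanti s t hst)
  exact ⟨ht.1.trans_le hle, ht.2.trans (by gcongr; exact hfin s hs)⟩

theorem volume_hslice_steinerV_ne_top {E : Set R2} (hE : MeasurableSet E) (hfin : volume E ≠ ⊤)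
    {s : ℝ} (hs : s ≠ 0) : volume (hslice (steinerV E) s) ≠ ⊤ := by
  have hm : Measurable fun x => volume (vslice E x) := measurable_measure_prodMk_left hE
  have hε : ENNReal.ofReal (2 * |s|) ≠ 0 := by simpa using abs_pos.2 hs
  have hsub : hslice (steinerV E) s ⊆ {x | ENNReal.ofReal (2 * |s|) ≤ volume (vslice E x)} := by
    intro x ⟨hpos, hle⟩
    have hne : volume (vslice E x) ≠ ⊤ := by
      intro htop
      rw [htop, ENNReal.toReal_top] at hle
      exact hs (abs_nonpos_iff.1 (by linarith))
    rw [mem_ofPred_eq, ENNReal.ofReal_le_iff_le_toReal hne]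
    linarith
  have hint : ∫⁻ x, volume (vslice E x) = volume E := by
    rw [Measure.volume_eq_prod, Measure.prod_apply hE]
    rfl
  refine ne_top_of_le_ne_top ?_ ((measure_mono hsub).trans
    (meas_ge_le_lintegral_div hm.aemeasurable hε ENNReal.ofReal_ne_top))
  rw [hint]
  exact ENNReal.div_ne_top hfin hε

theorem volume_prod_Icc_add_inter_le {D : Set R2} (hD : MeasurableSet D)
    (hv : ∀ x, IsSymmDecreasing (vslice D x)) {s : Set ℝ} (hs : MeasurableSet s) (b d : ℝ) :
    volume ((s ×ˢ Icc (-b + d) (b + d)) ∩ D) ≤ volume ((s ×ˢ Icc (-b) b) ∩ D) := by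
  rw [Measure.volume_eq_prod, Measure.prod_apply ((hs.prod measurableSet_Icc).inter hD),
    Measure.prod_apply ((hs.prod measurableSet_Icc).inter hD)]
  refine lintegral_mono fun x => ?_
  by_cases hx : x ∈ s
  · simp only [preimage_inter, mk_preimage_prod_right hx]
    exact (hv x).volume_Icc_add_inter_le b d
  · simp [hx]

theorem volume_Icc_add_prod_inter_le {D : Set R2} (hD : MeasurableSet D)
    (hh : ∀ y, IsSymmDecreasing (hslice D y)) {s : Set ℝ} (hs : MeasurableSet s) (a c : ℝ) :
    volume ((Icc (-a + c) (a + c) ×ˢ s) ∩ D) ≤ volume ((Icc (-a) a ×ˢ s) ∩ D) := by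
  have hswap : MeasurePreserving (Prod.swap : R2 → R2) volume volume := by
    simpa only [← Measure.volume_eq_prod] using
      Measure.measurePreserving_swap (μ := (volume : Measure ℝ)) (ν := volume)
  rw [← hswap.measure_preimage ((measurableSet_Icc.prod hs).inter hD).nullMeasurableSet,
    ← hswap.measure_preimage ((measurableSet_Icc.prod hs).inter hD).nullMeasurableSet]
  simpa only [preimage_inter, preimage_swap_prod] using
    volume_prod_Icc_add_inter_le (hD.preimage measurable_swap) hh hs a c

theorem volume_Icc_add_prod_Icc_add_inter_le {D : Set R2} (hD : MeasurableSet D)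
    (hv : ∀ x, IsSymmDecreasing (vslice D x)) (hh : ∀ y, IsSymmDecreasing (hslice D y))
    (a b c d : ℝ) :
    volume ((Icc (-a + c) (a + c) ×ˢ Icc (-b + d) (b + d)) ∩ D) ≤
      volume ((Icc (-a) a ×ˢ Icc (-b) b) ∩ D) :=
  (volume_Icc_add_prod_inter_le hD hh measurableSet_Icc a c).trans
    (volume_prod_Icc_add_inter_le hD hv measurableSet_Icc b d)

theorem isSymmDecreasing_vslice_dagger {E : Set R2} (hE : MeasurableSet E) (hfin : volume E < ⊤)
    (x : ℝ) : IsSymmDecreasing (vslice (dagger E) x) :=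
  isSymmDecreasing_vslice_steinerH (fun _ _ => hslice_steinerV_subset_of_abs_le E)
    (fun _ => volume_hslice_steinerV_ne_top hE hfin.ne) x

theorem image_add_Icc_prod_Icc (a b : ℝ) (y : R2) :
    (fun p => p + y) '' (Icc (-a) a ×ˢ Icc (-b) b) =
      Icc (-a + y.1) (a + y.1) ×ˢ Icc (-b + y.2) (b + y.2) := by
  rw [← image_add_const_Icc, ← image_add_const_Icc, prod_image_image_eq]
  rfl

theorem translate_rectangle_intersection_le_general (E : Set R2) (hE : MeasurableSet E)
    (hfin : volume E < ⊤) (hsym : volume (symmDiff E (dagger E)) = 0)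
    (a b : ℝ) (y : R2) :
    volume (((fun p => p + y) '' (Icc (-a) a ×ˢ Icc (-b) b)) ∩ E) ≤
      volume ((Icc (-a) a ×ˢ Icc (-b) b) ∩ E) := by
  have hae : E =ᵐ[volume] dagger E := measure_symmDiff_eq_zero_iff.mp hsym
  rw [measure_congr (ae_eq_refl _ |>.inter hae), measure_congr (ae_eq_refl _ |>.inter hae),
    image_add_Icc_prod_Icc]
  exact volume_Icc_add_prod_Icc_add_inter_le hE.steinerV.steinerH
    (isSymmDecreasing_vslice_dagger hE hfin) (isSymmDecreasing_hslice_steinerH _) a b y.1 y.2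

/-- If E = E† (up to null sets), then for any axis-parallel rectangle R centered
at the origin and any y, |(R + y) ∩ E| ≤ |R ∩ E|. -/
theorem translate_rectangle_intersection_le (E : Set R2) (hE : MeasurableSet E)
    (hfin : volume E < ⊤) (hsym : volume (symmDiff E (dagger E)) = 0)
    (a b : ℝ) (ha : 0 ≤ a) (hb : 0 ≤ b) (y : R2) :
    volume (((fun p => p + y) '' (Icc (-a) a ×ˢ Icc (-b) b)) ∩ E) ≤
      volume ((Icc (-a) a ×ˢ Icc (-b) b) ∩ E) :=
  translate_rectangle_intersection_le_general E hE hfin hsym a b y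

end
end

section
/- For j = 1,2,3,4 let {R_k^{(j)} : k ∈ ℤ} be families of axis-parallel rectangles in ℝ² with R_k^{(j)} = I_k^{(j)} × J_k^{(j)} where J_k^{(j)} has length 2^k, and suppose Σ_k |R_k^{(j)}| < ∞ for each j. Assume the partial symmetry and nondegeneracy hypotheses on the maps L_i. Then there exists C < ∞ (depending only on the L_i) such that for any S ⊂ ℤ⁴, Σ_{k∈S} Λ(R_{k₁}^{(1)}, R_{k₂}^{(2)}, R_{k₃}^{(3)}, R_{k₄}^{(4)}) ≤ C · [sup_{k∈S} 2^{−(max_i k_i − min_j k_j)/2}] · [sup_{k∈S} max_n |R_{k_n}^{(n)}|] · max_j Σ_k |R_k^{(j)}|. -/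
open MeasureTheory Set

noncomputable section

/-!
For rectangles `Iₙ × Jₙ` the form factorises as `|X| · |Y|`, where `X = ⋂ₙ (L¹ₙ)⁻¹ Iₙ` and
`Y = ⋂ₙ (L²ₙ)⁻¹ Jₙ`. Nondegeneracy bounds `|X|` by `|Iᵢ| |Iⱼ|` and `|Y|` by `|Jᵢ| |Jⱼ|` for any
`i ≠ j`, up to an inverse determinant. Sorting the scales `k`, we put the two largest into the
`X`-factor and the two smallest into the `Y`-factor (where `|Jₙ| = 2^kₙ`), which gives
`Λ ≤ C · maxₙ |Rₙ| · Σₙ |Rₙ| · 2^-(max k - min k)`. One half of the decay is bounded by its supremum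
over `S`; the other half is at most `∏ᵢ 2^(-|kᵢ - kⱼ|/8)`, so after the shear
`k ↦ (kⱼ, (kᵢ - kⱼ)ᵢ≠ⱼ)` the sum over `k ∈ ℤ⁴` is a product of geometric series and `Σ |R^{(j)}|`.
-/

section Spread

variable {ι : Type*} [Fintype ι] [Nonempty ι]

def spread (k : ι → ℤ) : ℤ :=
  Finset.univ.sup' Finset.univ_nonempty k - Finset.univ.inf' Finset.univ_nonempty k

lemma abs_sub_le_spread (k : ι → ℤ) (i j : ι) : |k i - k j| ≤ spread k := by
  have hi := Finset.le_sup' k (Finset.mem_univ i)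
  have hj := Finset.le_sup' k (Finset.mem_univ j)
  have hi' := Finset.inf'_le k (Finset.mem_univ i)
  have hj' := Finset.inf'_le k (Finset.mem_univ j)
  rw [abs_le, spread]
  omega

lemma spread_nonneg (k : ι → ℤ) : 0 ≤ spread k := by
  simpa using abs_sub_le_spread k (Classical.arbitrary ι) (Classical.arbitrary ι)

lemma pow_card_mul_spread_le_prod {ρ : ℝ} (hρ0 : 0 ≤ ρ) (hρ1 : ρ ≤ 1) (k : ι → ℤ) (j : ι) :
    ρ ^ (Fintype.card ι * (spread k).toNat) ≤ ∏ i, ρ ^ (k i - k j).natAbs := by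
  rw [pow_mul', ← Finset.card_univ, ← Finset.prod_const]
  refine Finset.prod_le_prod (fun _ _ => by positivity) fun i _ => pow_le_pow_of_le_one hρ0 hρ1 ?_
  have := abs_le.1 (abs_sub_le_spread k i j)
  omega

end Spread

lemma sum_prod_le_prod_tsum {ι κ : Type*} [Fintype ι] (f : ι → κ → ℝ) (hf0 : ∀ i s, 0 ≤ f i s)
    (hf : ∀ i, Summable (f i)) (U : Finset (ι → κ)) :
    ∑ t ∈ U, ∏ i, f i (t i) ≤ ∏ i, ∑' s, f i s := by
  classical
  calc ∑ t ∈ U, ∏ i, f i (t i)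
      ≤ ∑ t ∈ Fintype.piFinset fun i => U.image (· i), ∏ i, f i (t i) :=
        Finset.sum_le_sum_of_subset_of_nonneg
          (fun t ht => Fintype.mem_piFinset.2 fun i => Finset.mem_image_of_mem _ ht)
          (fun t _ _ => Finset.prod_nonneg fun i _ => hf0 i _)
    _ = ∏ i, ∑ s ∈ U.image (· i), f i s := (Finset.prod_univ_sum _ _).symm
    _ ≤ ∏ i, ∑' s, f i s :=
        Finset.prod_le_prod (fun i _ => Finset.sum_nonneg fun s _ => hf0 i s)
          (fun i _ => (hf i).sum_le_tsum _ fun s _ => hf0 i s)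

lemma summable_pow_natAbs {ρ : ℝ} (hρ0 : 0 ≤ ρ) (hρ1 : ρ < 1) :
    Summable fun t : ℤ => ρ ^ t.natAbs := by
  have := summable_geometric_of_lt_one hρ0 hρ1
  exact .of_nat_of_neg (by simpa using this) (by simpa using this)

section Shear

variable {ι : Type*} [DecidableEq ι]

def shearAt (j : ι) (k : ι → ℤ) : ι → ℤ := fun i => if i = j then k j else k i - k j

lemma shearAt_injective (j : ι) : Function.Injective (shearAt j) := by
  intro k k' he
  have hj : k j = k' j := by simpa [shearAt] using congrFun he j
  funext i
  by_cases hij : i = j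
  · rwa [hij]
  · have := congrFun he i
    simp only [shearAt, if_neg hij] at this
    omega

variable [Fintype ι] [Nonempty ι]

lemma sum_pow_spread_mul_le {ρ : ℝ} (hρ0 : 0 ≤ ρ) (hρ1 : ρ < 1) {g : ℤ → ℝ} (hg0 : ∀ s, 0 ≤ g s)
    (hg : Summable g) (j : ι) (U : Finset (ι → ℤ)) :
    ∑ k ∈ U, ρ ^ (Fintype.card ι * (spread k).toNat) * g (k j) ≤
      (∑' t : ℤ, ρ ^ t.natAbs) ^ (Fintype.card ι - 1) * ∑' s, g s := by
  set f : ι → ℤ → ℝ := fun i => if i = j then g else fun t => ρ ^ t.natAbs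
  have hf0 : ∀ i s, 0 ≤ f i s := fun i s => by
    by_cases hij : i = j <;> simp [f, hij, hg0, hρ0]
  have hf : ∀ i, Summable (f i) := fun i => by
    by_cases hij : i = j <;> simp [f, hij, hg, summable_pow_natAbs hρ0 hρ1]
  have hprod (k : ι → ℤ) : g (k j) * ∏ i, ρ ^ (k i - k j).natAbs = ∏ i, f i (shearAt j k i) := by
    rw [Fintype.prod_eq_mul_prod_compl j, Fintype.prod_eq_mul_prod_compl j]
    simp only [f, shearAt, if_pos, sub_self, Int.natAbs_zero, pow_zero, one_mul]
    refine congrArg _ (Finset.prod_congr rfl fun i hi => ?_)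
    have hij : i ≠ j := by simpa using hi
    simp only [if_neg hij]
  have htsum : ∏ i, ∑' s, f i s = (∑' t : ℤ, ρ ^ t.natAbs) ^ (Fintype.card ι - 1) * ∑' s, g s := by
    rw [Fintype.prod_eq_mul_prod_compl j, mul_comm]
    simp only [f, if_pos]
    refine congrArg (· * _) ?_
    rw [Finset.prod_congr rfl fun i hi => by rw [if_neg (by simpa using hi)], Finset.prod_const,
      Finset.card_compl, Finset.card_singleton]
  calc ∑ k ∈ U, ρ ^ (Fintype.card ι * (spread k).toNat) * g (k j)
      ≤ ∑ k ∈ U, ∏ i, f i (shearAt j k i) := Finset.sum_le_sum fun k _ => by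
        rw [← hprod, mul_comm]
        exact mul_le_mul_of_nonneg_left (pow_card_mul_spread_le_prod hρ0 hρ1.le k j) (hg0 _)
    _ = ∑ t ∈ U.image (shearAt j), ∏ i, f i (t i) :=
        (Finset.sum_image (f := fun t => ∏ i, f i (t i))
          fun _ _ _ _ e => shearAt_injective j e).symm
    _ ≤ ∏ i, ∑' s, f i s := sum_prod_le_prod_tsum f hf0 hf _
    _ = _ := htsum

end Shear

section Geometry

variable {ι : Type*}

lemma volume_iInter_preimage_le (L : ι → R2 →ₗ[ℝ] ℝ) {i j : ι}
    (hij : Function.Bijective fun x => (L i x, L j x)) (I : ι → Set ℝ) :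
    volume (⋂ n, L n ⁻¹' I n) ≤
      ENNReal.ofReal |(LinearMap.det ((L i).prod (L j)))⁻¹| * (volume (I i) * volume (I j)) := by
  have hdet : LinearMap.det ((L i).prod (L j)) ≠ 0 :=
    ((LinearMap.isUnit_iff_isUnit_det _).1 ((Module.End.isUnit_iff _).2 hij)).ne_zero
  calc volume (⋂ n, L n ⁻¹' I n) ≤ volume ((L i).prod (L j) ⁻¹' (I i ×ˢ I j)) :=
        measure_mono fun x hx => ⟨mem_iInter.1 hx i, mem_iInter.1 hx j⟩
    _ = _ := by
        rw [Measure.addHaar_preimage_linearMap volume hdet, Measure.volume_eq_prod,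
          Measure.prod_prod]

variable [Fintype ι]

def invDetSum (L : ι → R2 →ₗ[ℝ] ℝ) : ℝ :=
  ∑ i, ∑ j, |(LinearMap.det ((L i).prod (L j)))⁻¹|

lemma invDetSum_nonneg (L : ι → R2 →ₗ[ℝ] ℝ) : 0 ≤ invDetSum L :=
  Finset.sum_nonneg fun _ _ => Finset.sum_nonneg fun _ _ => abs_nonneg _

lemma abs_inv_det_le_invDetSum (L : ι → R2 →ₗ[ℝ] ℝ) (i j : ι) :
    |(LinearMap.det ((L i).prod (L j)))⁻¹| ≤ invDetSum L :=
  (Finset.single_le_sum (f := fun j => |(LinearMap.det ((L i).prod (L j)))⁻¹|)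
      (fun _ _ => abs_nonneg _) (Finset.mem_univ j)).trans
    (Finset.single_le_sum (f := fun i => ∑ j, |(LinearMap.det ((L i).prod (L j)))⁻¹|)
      (fun _ _ => Finset.sum_nonneg fun _ _ => abs_nonneg _)
      (Finset.mem_univ i))

lemma measureReal_iInter_preimage_Icc_le (L : ι → R2 →ₗ[ℝ] ℝ) {i j : ι}
    (hij : Function.Bijective fun x => (L i x, L j x)) {a b : ι → ℝ} (hi : a i ≤ b i)
    (hj : a j ≤ b j) :
    volume.real (⋂ n, L n ⁻¹' Icc (a n) (b n)) ≤ invDetSum L * ((b i - a i) * (b j - a j)) := by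
  have h := volume_iInter_preimage_le L hij fun n => Icc (a n) (b n)
  rw [Real.volume_Icc, Real.volume_Icc, ← ENNReal.ofReal_mul (sub_nonneg.2 hi),
    ← ENNReal.ofReal_mul (abs_nonneg _)] at h
  refine (ENNReal.toReal_le_of_le_ofReal (by positivity) h).trans ?_
  gcongr
  exact abs_inv_det_le_invDetSum L i j

lemma integral_prod_indicator_comp (L : ι → R2 →ₗ[ℝ] ℝ) {I : ι → Set ℝ}
    (hI : ∀ n, MeasurableSet (I n)) :
    ∫ x, ∏ n, (I n).indicator (fun _ => (1 : ℝ)) (L n x) = volume.real (⋂ n, L n ⁻¹' I n) := by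
  classical
  have hmeas : MeasurableSet (⋂ n, L n ⁻¹' I n) :=
    .iInter fun n => (L n).continuous_of_finiteDimensional.measurable (hI n)
  rw [← integral_indicator_one hmeas]
  congr with x
  simp only [Set.indicator_apply, Finset.prod_boole, mem_iInter, mem_preimage, Finset.mem_univ,
    true_implies, Pi.one_apply]

end Geometry

lemma LamPS_prod_eq (L1 L2 : Fin 4 → R2 →ₗ[ℝ] ℝ) {I J : Fin 4 → Set ℝ}
    (hI : ∀ n, MeasurableSet (I n)) (hJ : ∀ n, MeasurableSet (J n)) :
    LamPS L1 L2 (fun n => I n ×ˢ J n) =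
      volume.real (⋂ n, L1 n ⁻¹' I n) * volume.real (⋂ n, L2 n ⁻¹' J n) := by
  have hsplit (z : R2 × R2) :
      ∏ n, (I n ×ˢ J n).indicator (fun _ => (1 : ℝ)) (L1 n z.1, L2 n z.2) =
        (∏ n, (I n).indicator (fun _ => 1) (L1 n z.1)) *
          ∏ n, (J n).indicator (fun _ => 1) (L2 n z.2) := by
    rw [← Finset.prod_mul_distrib]
    exact Finset.prod_congr rfl fun n _ => Set.indicator_prod_one
  rw [LamPS, funext hsplit, Measure.volume_eq_prod,
    integral_prod_mul (fun x => ∏ n, (I n).indicator (fun _ => (1 : ℝ)) (L1 n x))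
      (fun y => ∏ n, (J n).indicator (fun _ => (1 : ℝ)) (L2 n y)),
    integral_prod_indicator_comp L1 hI, integral_prod_indicator_comp L2 hJ]

lemma LamPS_Icc_prod_Icc_le (L1 L2 : Fin 4 → R2 →ₗ[ℝ] ℝ) {i₁ j₁ i₂ j₂ : Fin 4}
    (h₁ : Function.Bijective fun x => (L1 i₁ x, L1 j₁ x))
    (h₂ : Function.Bijective fun y => (L2 i₂ y, L2 j₂ y)) {a b c d : Fin 4 → ℝ}
    (hab : ∀ n, a n ≤ b n) (hcd : ∀ n, c n ≤ d n) :
    LamPS L1 L2 (fun n => Icc (a n) (b n) ×ˢ Icc (c n) (d n)) ≤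
      invDetSum L1 * invDetSum L2 *
        ((b i₁ - a i₁) * (b j₁ - a j₁) * ((d i₂ - c i₂) * (d j₂ - c j₂))) := by
  have hX := measureReal_iInter_preimage_Icc_le L1 h₁ (hab i₁) (hab j₁)
  have hY := measureReal_iInter_preimage_Icc_le L2 h₂ (hcd i₂) (hcd j₂)
  rw [LamPS_prod_eq L1 L2 (fun _ => measurableSet_Icc) (fun _ => measurableSet_Icc),
    mul_mul_mul_comm]
  exact mul_le_mul hX hY measureReal_nonneg (measureReal_nonneg.trans hX)

lemma sorted_exponent_le_neg_spread (k : Fin 4 → ℤ) {σ : Equiv.Perm (Fin 4)}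
    (hσ : Monotone (k ∘ σ)) : k (σ 0) + k (σ 1) - k (σ 2) - k (σ 3) ≤ -spread k := by
  have hsup : Finset.univ.sup' Finset.univ_nonempty k ≤ k (σ 3) :=
    Finset.sup'_le _ _ fun i _ => by simpa using hσ (Fin.le_last (σ.symm i))
  have hinf : k (σ 0) ≤ Finset.univ.inf' Finset.univ_nonempty k :=
    Finset.le_inf' _ _ fun i _ => by simpa using hσ (Fin.zero_le (σ.symm i))
  have hmid : k (σ 1) ≤ k (σ 2) := hσ (by decide)
  rw [spread]
  omega

lemma LamPS_dyadic_le (L1 L2 : Fin 4 → R2 →ₗ[ℝ] ℝ)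
    (hnd : ∀ i j, i ≠ j →
      Function.Bijective (fun x : R2 => (L1 i x, L1 j x)) ∧
      Function.Bijective (fun y : R2 => (L2 i y, L2 j y)))
    {a b : Fin 4 → ℝ} (hab : ∀ n, a n ≤ b n) (c : Fin 4 → ℝ) (k : Fin 4 → ℤ) :
    LamPS L1 L2 (fun n => Icc (a n) (b n) ×ˢ Icc (c n) (c n + 2 ^ k n)) ≤
      invDetSum L1 * invDetSum L2 *
        ((⨆ n, (b n - a n) * 2 ^ k n) * ∑ n, (b n - a n) * 2 ^ k n) * 2 ^ (-spread k) := by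
  set σ := Tuple.sort k
  set g : Fin 4 → ℝ := fun n => (b n - a n) * 2 ^ k n
  have hg0 (n : Fin 4) : 0 ≤ g n := mul_nonneg (sub_nonneg.2 (hab n)) (by positivity)
  have hσ {p q : Fin 4} (h : p ≠ q) : σ p ≠ σ q := σ.injective.ne h
  have hD := mul_nonneg (invDetSum_nonneg L1) (invDetSum_nonneg L2)
  have hbound := LamPS_Icc_prod_Icc_le L1 L2 (hnd _ _ (hσ (by decide : (2 : Fin 4) ≠ 3))).1
    (hnd _ _ (hσ (by decide : (0 : Fin 4) ≠ 1))).2 hab (d := fun n => c n + 2 ^ k n)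
    fun n => le_add_of_nonneg_right (by positivity)
  have hrewrite : (b (σ 2) - a (σ 2)) * (b (σ 3) - a (σ 3)) *
      ((c (σ 0) + 2 ^ k (σ 0) - c (σ 0)) * (c (σ 1) + 2 ^ k (σ 1) - c (σ 1))) =
      g (σ 2) * g (σ 3) * 2 ^ (k (σ 0) + k (σ 1) - k (σ 2) - k (σ 3)) := by
    simp only [g, add_sub_cancel_left]
    rw [zpow_sub₀ two_ne_zero, zpow_sub₀ two_ne_zero, zpow_add₀ two_ne_zero]
    field_simp
  calc _ ≤ _ := hbound
    _ = invDetSum L1 * invDetSum L2 *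
          (g (σ 2) * g (σ 3) * 2 ^ (k (σ 0) + k (σ 1) - k (σ 2) - k (σ 3))) := by rw [hrewrite]
    _ ≤ invDetSum L1 * invDetSum L2 * ((⨆ n, g n) * (∑ n, g n) * 2 ^ (-spread k)) := by
        have hsup : g (σ 2) ≤ ⨆ n, g n := le_ciSup (Set.finite_range g).bddAbove _
        have hsum : g (σ 3) ≤ ∑ n, g n :=
          Finset.single_le_sum (fun n _ => hg0 n) (Finset.mem_univ _)
        have hexp : (2 : ℝ) ^ (k (σ 0) + k (σ 1) - k (σ 2) - k (σ 3)) ≤ 2 ^ (-spread k) :=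
          zpow_le_zpow_right₀ one_le_two (sorted_exponent_le_neg_spread k (Tuple.monotone_sort k))
        gcongr
        · exact mul_nonneg (Real.iSup_nonneg hg0) (Finset.sum_nonneg fun n _ => hg0 n)
        · exact hg0 _
        · exact Real.iSup_nonneg hg0
    _ = _ := by ring

lemma exists_sum_two_rpow_neg_spread_mul_le :
    ∃ K : ℝ, 0 ≤ K ∧ ∀ g : ℤ → ℝ, (∀ s, 0 ≤ g s) → Summable g →
      ∀ (j : Fin 4) (U : Finset (Fin 4 → ℤ)),
        ∑ k ∈ U, (2 : ℝ) ^ (-(spread k : ℝ) / 2) * g (k j) ≤ K * ∑' s, g s := by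
  set ρ : ℝ := 2 ^ (-(1 / 8 : ℝ))
  have hρ0 : 0 ≤ ρ := by positivity
  have hρ1 : ρ < 1 := Real.rpow_lt_one_of_one_lt_of_neg one_lt_two (by norm_num)
  have hweight (k : Fin 4 → ℤ) :
      (2 : ℝ) ^ (-(spread k : ℝ) / 2) = ρ ^ (Fintype.card (Fin 4) * (spread k).toNat) := by
    have hcast : ((spread k).toNat : ℝ) = spread k := by
      exact_mod_cast Int.toNat_of_nonneg (spread_nonneg k)
    rw [← Real.rpow_natCast, ← Real.rpow_mul zero_le_two, Nat.cast_mul, hcast, Fintype.card_fin]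
    ring_nf
  refine ⟨(∑' t : ℤ, ρ ^ t.natAbs) ^ 3, pow_nonneg (tsum_nonneg fun _ => by positivity) 3,
    fun g hg0 hg j U => ?_⟩
  simp_rw [hweight]
  simpa using sum_pow_spread_mul_le hρ0 hρ1 hg0 hg j U

lemma LamPS_dyadic_le_of_le (L1 L2 : Fin 4 → R2 →ₗ[ℝ] ℝ)
    (hnd : ∀ i j, i ≠ j →
      Function.Bijective (fun x : R2 => (L1 i x, L1 j x)) ∧
      Function.Bijective (fun y : R2 => (L2 i y, L2 j y)))
    {a b : Fin 4 → ℝ} (hab : ∀ n, a n ≤ b n) (c : Fin 4 → ℝ) (k : Fin 4 → ℤ) {A B : ℝ}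
    (hA : (2 : ℝ) ^ (-(spread k : ℝ) / 2) ≤ A) (hB : ⨆ n, (b n - a n) * 2 ^ k n ≤ B) :
    LamPS L1 L2 (fun n => Icc (a n) (b n) ×ˢ Icc (c n) (c n + 2 ^ k n)) ≤
      invDetSum L1 * invDetSum L2 * A * B *
        ∑ n, (2 : ℝ) ^ (-(spread k : ℝ) / 2) * ((b n - a n) * 2 ^ k n) := by
  set w : ℝ := 2 ^ (-(spread k : ℝ) / 2)
  have hsplit : (2 : ℝ) ^ (-spread k) = w * w := by
    rw [← Real.rpow_add two_pos, ← Real.rpow_intCast]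
    push_cast
    ring_nf
  have hg0 (n : Fin 4) : 0 ≤ (b n - a n) * 2 ^ k n :=
    mul_nonneg (sub_nonneg.2 (hab n)) (by positivity)
  have hsup0 := Real.iSup_nonneg hg0
  have hsum0 : 0 ≤ ∑ n, w * ((b n - a n) * 2 ^ k n) :=
    Finset.sum_nonneg fun n _ => mul_nonneg (by positivity) (hg0 n)
  have hA0 : 0 ≤ A := (by positivity : 0 ≤ w).trans hA
  have hD := mul_nonneg (invDetSum_nonneg L1) (invDetSum_nonneg L2)
  calc _ ≤ _ := LamPS_dyadic_le L1 L2 hnd hab c k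
    _ = invDetSum L1 * invDetSum L2 * w * (⨆ n, (b n - a n) * 2 ^ k n) *
          ∑ n, w * ((b n - a n) * 2 ^ k n) := by
        rw [hsplit, ← Finset.mul_sum]
        ring
    _ ≤ _ := by gcongr

theorem lam_rectangle_sum_bound_general (L1 L2 : Fin 4 → R2 →ₗ[ℝ] ℝ)
    (hnd : ∀ i j, i ≠ j →
      Function.Bijective (fun x : R2 => (L1 i x, L1 j x)) ∧
      Function.Bijective (fun y : R2 => (L2 i y, L2 j y))) :
    ∃ C : ℝ, 0 ≤ C ∧ ∀ (a b c : Fin 4 → ℤ → ℝ),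
      (∀ j k, a j k ≤ b j k) →
      (∀ j, Summable (fun k : ℤ => (b j k - a j k) * 2 ^ k)) →
      ∀ S : Set (Fin 4 → ℤ),
        ∑' k : S, LamPS L1 L2 (fun j =>
            Icc (a j (k.1 j)) (b j (k.1 j)) ×ˢ
              Icc (c j (k.1 j)) (c j (k.1 j) + 2 ^ (k.1 j))) ≤
          C * (⨆ k : S, (2 : ℝ) ^
                (-(((Finset.univ.sup' Finset.univ_nonempty k.1 -
                    Finset.univ.inf' Finset.univ_nonempty k.1 : ℤ) : ℝ)) / 2)) *
            (⨆ k : S, ⨆ n : Fin 4, (b n (k.1 n) - a n (k.1 n)) * 2 ^ (k.1 n)) *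
            ⨆ j : Fin 4, ∑' k : ℤ, (b j k - a j k) * 2 ^ k := by
  obtain ⟨K, hK0, hK⟩ := exists_sum_two_rpow_neg_spread_mul_le
  have hD := mul_nonneg (invDetSum_nonneg L1) (invDetSum_nonneg L2)
  refine ⟨invDetSum L1 * invDetSum L2 * (4 * K), by positivity, fun a b c hab hsum S => ?_⟩
  set g : Fin 4 → ℤ → ℝ := fun j m => (b j m - a j m) * 2 ^ m
  set w : (Fin 4 → ℤ) → ℝ := fun k => 2 ^ (-(spread k : ℝ) / 2)
  have hg0 (j : Fin 4) (m : ℤ) : 0 ≤ g j m := mul_nonneg (sub_nonneg.2 (hab j m)) (by positivity)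
  show _ ≤ _ * (⨆ k : S, w k) * (⨆ k : S, ⨆ n, g n (k.1 n)) * ⨆ j, ∑' m, g j m
  set A := ⨆ k : S, w k
  set B := ⨆ k : S, ⨆ n, g n (k.1 n)
  set T := ⨆ j, ∑' m, g j m
  have hT (j : Fin 4) : ∑' m, g j m ≤ T :=
    le_ciSup (f := fun j => ∑' m, g j m) (Set.finite_range _).bddAbove j
  have hA (k : S) : w k ≤ A :=
    le_ciSup (f := fun k : S => w k) ⟨1, Set.forall_mem_range.2 fun k =>
      Real.rpow_le_one_of_one_le_of_nonpos one_le_two <| div_nonpos_of_nonpos_of_nonneg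
        (neg_nonpos.2 (Int.cast_nonneg (spread_nonneg k.1))) zero_le_two⟩ k
  have hB (k : S) : ⨆ n, g n (k.1 n) ≤ B :=
    le_ciSup (f := fun k : S => ⨆ n, g n (k.1 n)) ⟨T, Set.forall_mem_range.2 fun k =>
      ciSup_mono (Set.finite_range _).bddAbove fun n => (hsum n).le_tsum _ fun m _ => hg0 n m⟩ k
  have hA0 : 0 ≤ A := Real.iSup_nonneg fun k => by positivity
  have hB0 : 0 ≤ B := Real.iSup_nonneg fun k => Real.iSup_nonneg fun n => hg0 _ _
  have hT0 : 0 ≤ T := (tsum_nonneg (hg0 0)).trans (hT 0)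
  refine tsum_le_of_sum_le' (by positivity) fun U => ?_
  calc _ ≤ ∑ k ∈ U, invDetSum L1 * invDetSum L2 * A * B * ∑ n, w k * g n (k.1 n) :=
        Finset.sum_le_sum fun k _ => LamPS_dyadic_le_of_le L1 L2 hnd (fun n => hab n _) _ k.1
          (hA k) (hB k)
    _ = invDetSum L1 * invDetSum L2 * A * B *
          ∑ n, ∑ k ∈ U.map (Function.Embedding.subtype _), w k * g n (k n) := by
        rw [← Finset.mul_sum, Finset.sum_comm]
        simp [Finset.sum_map]
    _ ≤ invDetSum L1 * invDetSum L2 * A * B * ∑ _n : Fin 4, K * T := by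
        gcongr with n
        exact (hK _ (hg0 n) (hsum n) n _).trans (by gcongr; exact hT n)
    _ = _ := by
        simp only [Finset.sum_const, Finset.card_univ, Fintype.card_fin, nsmul_eq_mul,
          Nat.cast_ofNat]
        ring

/-- Summation lemma over families of rectangles R_k^{(j)} = I_k^{(j)} × J_k^{(j)}
with |J_k^{(j)}| = 2^k. -/
theorem lam_rectangle_sum_bound (L1 L2 : Fin 4 → R2 →ₗ[ℝ] ℝ)
    (hsurj : ∀ n, Function.Surjective (L1 n) ∧ Function.Surjective (L2 n))
    (hnd : ∀ i j, i ≠ j →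
      Function.Bijective (fun x : R2 => (L1 i x, L1 j x)) ∧
      Function.Bijective (fun y : R2 => (L2 i y, L2 j y))) :
    ∃ C : ℝ, 0 ≤ C ∧ ∀ (a b c : Fin 4 → ℤ → ℝ),
      (∀ j k, a j k ≤ b j k) →
      (∀ j, Summable (fun k : ℤ => (b j k - a j k) * 2 ^ k)) →
      ∀ S : Set (Fin 4 → ℤ),
        ∑' k : S, LamPS L1 L2 (fun j =>
            Icc (a j (k.1 j)) (b j (k.1 j)) ×ˢ
              Icc (c j (k.1 j)) (c j (k.1 j) + 2 ^ (k.1 j))) ≤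
          C * (⨆ k : S, (2 : ℝ) ^
                (-(((Finset.univ.sup' Finset.univ_nonempty k.1 -
                    Finset.univ.inf' Finset.univ_nonempty k.1 : ℤ) : ℝ)) / 2)) *
            (⨆ k : S, ⨆ n : Fin 4, (b n (k.1 n) - a n (k.1 n)) * 2 ^ (k.1 n)) *
            ⨆ j : Fin 4, ∑' k : ℤ, (b j k - a j k) * 2 ^ k :=
  lam_rectangle_sum_bound_general L1 L2 hnd
end
end

section
/- Let E ⊂ ℝ² be a measurable set of finite measure such that E = E† (doubly Steiner symmetric). For the part E⁺ = {(x,y) ∈ E : x > 0}, write E⁺ = {(x,y) : x > 0, |y| < f(x)} with f : (0,∞) → [0,∞) nonincreasing and right continuous, and define rectangles R_k = {x > 0 : 2^k ≥ f(x) > 2^{k−1}} × [−2^k, 2^k] for k ∈ ℤ. Then (a) E⁺ ⊂ ∪_k R_k up to a null set, so |E| ≤ 2 Σ_k |R_k|; and (b) |R_k ∩ E| ≥ ½|R_k| for each k, so Σ_k |R_k| ≤ 2|E⁺| = |E|. -/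
open MeasureTheory Set

noncomputable section

/-- The dyadic rectangles R_k = {x > 0 : 2^k ≥ f(x) > 2^{k-1}} × [-2^k, 2^k]. -/
def Rk (f : ℝ → ℝ) (k : ℤ) : Set R2 :=
  {x : ℝ | 0 < x ∧ f x ≤ (2 : ℝ) ^ k ∧ (2 : ℝ) ^ (k - 1) < f x} ×ˢ
    Icc (-(2 : ℝ) ^ k) ((2 : ℝ) ^ k)

lemma steinerV_measurable (E : Set R2) (hE : MeasurableSet E) :
    MeasurableSet (steinerV E) := by
  have m1 : Measurable fun x : ℝ => volume (vslice E x) :=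
    measurable_measure_prodMk_left hE
  have h1 : MeasurableSet {p : R2 | 0 < volume (vslice E p.1)} :=
    (m1.comp measurable_fst) measurableSet_Ioi
  have h2 : MeasurableSet {p : R2 | |p.2| ≤ (volume (vslice E p.1)).toReal / 2} :=
    measurableSet_le measurable_snd.abs
      (((m1.comp measurable_fst).ennreal_toReal).div_const 2)
  have : steinerV E = {p : R2 | 0 < volume (vslice E p.1)} ∩
      {p : R2 | |p.2| ≤ (volume (vslice E p.1)).toReal / 2} := rfl
  rw [this]; exact h1.inter h2

lemma dagger_measurable (E : Set R2) (hE : MeasurableSet E) :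
    MeasurableSet (dagger E) := by
  have hV := steinerV_measurable E hE
  have m2 : Measurable fun y : ℝ => volume (hslice (steinerV E) y) :=
    measurable_measure_prodMk_right hV
  have h1 : MeasurableSet {p : R2 | 0 < volume (hslice (steinerV E) p.2)} :=
    (m2.comp measurable_snd) measurableSet_Ioi
  have h2 : MeasurableSet
      {p : R2 | |p.1| ≤ (volume (hslice (steinerV E) p.2)).toReal / 2} :=
    measurableSet_le measurable_fst.abs
      (((m2.comp measurable_snd).ennreal_toReal).div_const 2)
  have : dagger E = {p : R2 | 0 < volume (hslice (steinerV E) p.2)} ∩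
      {p : R2 | |p.1| ≤ (volume (hslice (steinerV E) p.2)).toReal / 2} := rfl
  rw [this]; exact h1.inter h2

lemma dagger_reflect (E : Set R2) :
    (fun p : R2 => (-p.1, p.2)) ⁻¹' dagger E = dagger E := by
  ext p
  simp only [dagger, steinerH, mem_preimage, mem_setOf_eq, abs_neg]

/-- Reflection symmetry: the two halves of E have equal measure. -/
lemma half_measure (E : Set R2) (hE : MeasurableSet E)
    (hsym : volume (symmDiff E (dagger E)) = 0) :
    volume (E ∩ {p : R2 | p.1 < 0}) = volume (E ∩ {p : R2 | 0 < p.1}) := by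
  have hED : E =ᵐ[volume] dagger E := measure_symmDiff_eq_zero_iff.mp hsym
  have hD := dagger_measurable E hE
  have hσ : MeasurePreserving (fun p : R2 => (-p.1, p.2)) volume volume := by
    rw [Measure.volume_eq_prod]
    exact (Measure.measurePreserving_neg volume).prod (MeasurePreserving.id volume)
  have hpre : (fun p : R2 => (-p.1, p.2)) ⁻¹' (dagger E ∩ {p : R2 | 0 < p.1})
      = dagger E ∩ {p : R2 | p.1 < 0} := by
    rw [preimage_inter, dagger_reflect]
    congr 1
    ext p
    simp [neg_pos]
  have hmeasplus : MeasurableSet (dagger E ∩ {p : R2 | 0 < p.1}) :=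
    hD.inter (measurable_fst measurableSet_Ioi)
  calc volume (E ∩ {p : R2 | p.1 < 0})
      = volume (dagger E ∩ {p : R2 | p.1 < 0}) :=
        measure_congr (ae_eq_set_inter hED (Filter.EventuallyEq.refl _ _))
    _ = volume ((fun p : R2 => (-p.1, p.2)) ⁻¹' (dagger E ∩ {p : R2 | 0 < p.1})) := by
        rw [hpre]
    _ = volume (dagger E ∩ {p : R2 | 0 < p.1}) :=
        hσ.measure_preimage hmeasplus.nullMeasurableSet
    _ = volume (E ∩ {p : R2 | 0 < p.1}) :=
        (measure_congr (ae_eq_set_inter hED (Filter.EventuallyEq.refl _ _))).symm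

lemma axis_null : volume ({p : R2 | p.1 = 0}) = 0 := by
  have : {p : R2 | p.1 = 0} = ({0} : Set ℝ) ×ˢ (univ : Set ℝ) := by
    ext p
    simp only [Set.mem_prod, mem_singleton_iff, mem_univ, and_true, mem_setOf_eq]
  rw [this, Measure.volume_eq_prod, Measure.prod_prod]
  simp

lemma volume_eq_twice_half (E : Set R2) (hE : MeasurableSet E)
    (hsym : volume (symmDiff E (dagger E)) = 0) :
    volume E = 2 * volume ({p : R2 | 0 < p.1 ∧ p ∈ E}) := by
  have hplus : {p : R2 | 0 < p.1 ∧ p ∈ E} = E ∩ {p : R2 | 0 < p.1} := by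
    ext p; simp [and_comm]
  have hmt : MeasurableSet {p : R2 | 0 < p.1} :=
    measurable_fst measurableSet_Ioi
  have hsplit := measure_inter_add_diff (μ := volume) E hmt
  have hdiff : E \ {p : R2 | 0 < p.1}
      = (E ∩ {p : R2 | p.1 < 0}) ∪ (E ∩ {p : R2 | p.1 = 0}) := by
    ext p
    simp only [mem_diff, mem_inter_iff, mem_union, mem_setOf_eq]
    constructor
    · rintro ⟨hp, h0⟩
      rcases lt_trichotomy p.1 0 with h | h | h
      · exact Or.inl ⟨hp, h⟩
      · exact Or.inr ⟨hp, h⟩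
      · exact absurd h h0
    · rintro (⟨hp, h⟩ | ⟨hp, h⟩) <;> exact ⟨hp, by intro h'; linarith⟩
  have hnull : volume (E ∩ {p : R2 | p.1 = 0}) = 0 :=
    measure_mono_null inter_subset_right axis_null
  have hud : volume (E \ {p : R2 | 0 < p.1}) = volume (E ∩ {p : R2 | p.1 < 0}) := by
    rw [hdiff]
    refine le_antisymm ?_ (measure_mono subset_union_left)
    calc volume ((E ∩ {p : R2 | p.1 < 0}) ∪ (E ∩ {p : R2 | p.1 = 0}))
        ≤ volume (E ∩ {p : R2 | p.1 < 0}) + volume (E ∩ {p : R2 | p.1 = 0}) :=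
          measure_union_le _ _
      _ = volume (E ∩ {p : R2 | p.1 < 0}) := by rw [hnull, add_zero]
  rw [hplus]
  rw [← hsplit, hud, half_measure E hE hsym, two_mul]

/-- Dyadic rectangle decomposition of a doubly Steiner symmetric set:
E⁺ ⊂ ∪ₖ Rₖ up to a null set, |E| ≤ 2 Σₖ |Rₖ|, |Rₖ ∩ E| ≥ ½ |Rₖ|, and
Σₖ |Rₖ| ≤ |E|. -/
theorem dyadic_rectangle_decomposition (E : Set R2) (hE : MeasurableSet E)
    (hfin : volume E < ⊤) (hsym : volume (symmDiff E (dagger E)) = 0)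
    (f : ℝ → ℝ) (hf0 : ∀ x, 0 ≤ f x) (hmono : AntitoneOn f (Ioi 0))
    (hrc : ∀ x > (0 : ℝ), ContinuousWithinAt f (Ici x) x)
    (hrep : volume (symmDiff {p : R2 | 0 < p.1 ∧ p ∈ E}
      {p : R2 | 0 < p.1 ∧ |p.2| < f p.1}) = 0) :
    volume ({p : R2 | 0 < p.1 ∧ p ∈ E} \ ⋃ k : ℤ, Rk f k) = 0 ∧
    volume E ≤ 2 * ∑' k : ℤ, volume (Rk f k) ∧
    (∀ k : ℤ, volume (Rk f k) ≤ 2 * volume (Rk f k ∩ E)) ∧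
    ∑' k : ℤ, volume (Rk f k) ≤ volume E := by
  have hae : {p : R2 | 0 < p.1 ∧ p ∈ E} =ᵐ[volume] {p : R2 | 0 < p.1 ∧ |p.2| < f p.1} :=
    measure_symmDiff_eq_zero_iff.mp hrep
  -- F ⊆ ⋃ Rk
  have hsubF : {p : R2 | 0 < p.1 ∧ |p.2| < f p.1} ⊆ ⋃ k : ℤ, Rk f k := by
    rintro ⟨x, y⟩ ⟨hx, hy⟩
    have hfx : 0 < f x := lt_of_le_of_lt (abs_nonneg y) hy
    obtain ⟨n, hn1, hn2⟩ := exists_mem_Ioc_zpow hfx (one_lt_two (α := ℝ))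
    refine mem_iUnion.mpr ⟨n + 1, ?_⟩
    have hk1 : (2 : ℝ) ^ (n + 1 - 1) < f x := by simpa using hn1
    refine ⟨⟨hx, hn2, hk1⟩, ?_⟩
    have hy' : |y| ≤ (2 : ℝ) ^ (n + 1) := le_trans (le_of_lt hy) hn2
    exact abs_le.mp hy'
  -- measurability of bases and rectangles
  have hBmeas : ∀ k : ℤ, MeasurableSet
      {x : ℝ | 0 < x ∧ f x ≤ (2 : ℝ) ^ k ∧ (2 : ℝ) ^ (k - 1) < f x} := by
    intro k
    apply Set.OrdConnected.measurableSet
    constructor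
    rintro a ⟨ha, hfa, hfa'⟩ b ⟨hb, hfb, hfb'⟩ z ⟨haz, hzb⟩
    have hz : 0 < z := lt_of_lt_of_le ha haz
    refine ⟨hz, ?_, ?_⟩
    · exact le_trans (hmono ha hz haz) hfa
    · exact lt_of_lt_of_le hfb' (hmono hz hb hzb)
  have hRmeas : ∀ k : ℤ, MeasurableSet (Rk f k) := fun k =>
    (hBmeas k).prod measurableSet_Icc
  -- disjointness
  have hdisj : Pairwise (Function.onFun Disjoint (Rk f)) := by
    intro k l hkl
    rw [Function.onFun, Set.disjoint_left]
    rintro ⟨x, y⟩ ⟨⟨_, hk1, hk2⟩, _⟩ ⟨⟨_, hl1, hl2⟩, _⟩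
    rcases hkl.lt_or_gt with h | h
    · have : (2 : ℝ) ^ k ≤ (2 : ℝ) ^ (l - 1) :=
        zpow_le_zpow_right₀ one_le_two (by omega)
      linarith
    · have : (2 : ℝ) ^ l ≤ (2 : ℝ) ^ (k - 1) :=
        zpow_le_zpow_right₀ one_le_two (by omega)
      linarith
  -- part 1
  have part1 : volume ({p : R2 | 0 < p.1 ∧ p ∈ E} \ ⋃ k : ℤ, Rk f k) = 0 := by
    have h1 : {p : R2 | 0 < p.1 ∧ p ∈ E} \ ⋃ k : ℤ, Rk f k ⊆
        symmDiff {p : R2 | 0 < p.1 ∧ p ∈ E} {p : R2 | 0 < p.1 ∧ |p.2| < f p.1} := by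
      intro p hp
      have hnotF : p ∉ {p : R2 | 0 < p.1 ∧ |p.2| < f p.1} :=
        fun h => hp.2 (hsubF h)
      exact Or.inl ⟨hp.1, hnotF⟩
    exact measure_mono_null h1 hrep
  -- volume of E = 2 * vol E⁺
  have hEhalf := volume_eq_twice_half E hE hsym
  have hEF : volume ({p : R2 | 0 < p.1 ∧ p ∈ E})
      = volume ({p : R2 | 0 < p.1 ∧ |p.2| < f p.1}) := measure_congr hae
  -- part 2
  have part2 : volume E ≤ 2 * ∑' k : ℤ, volume (Rk f k) := by
    rw [hEhalf, hEF]
    gcongr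
    exact le_trans (measure_mono hsubF) (measure_iUnion_le _)
  -- part 3
  have part3 : ∀ k : ℤ, volume (Rk f k) ≤ 2 * volume (Rk f k ∩ E) := by
    intro k
    set B := {x : ℝ | 0 < x ∧ f x ≤ (2 : ℝ) ^ k ∧ (2 : ℝ) ^ (k - 1) < f x} with hB
    have hpow : (0 : ℝ) < (2 : ℝ) ^ (k - 1) := zpow_pos two_pos _
    have hpk : (0 : ℝ) < (2 : ℝ) ^ k := zpow_pos two_pos _
    have hdouble : (2 : ℝ) * (2 : ℝ) ^ (k - 1) = (2 : ℝ) ^ k := by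
      rw [mul_comm, ← zpow_add_one₀ (two_ne_zero : (2 : ℝ) ≠ 0)]
      congr 1
      omega
    -- the inner rectangle
    have hS : B ×ˢ Icc (-(2 : ℝ) ^ (k - 1)) ((2 : ℝ) ^ (k - 1)) ⊆
        Rk f k ∩ {p : R2 | 0 < p.1 ∧ |p.2| < f p.1} := by
      rintro ⟨x, y⟩ ⟨hxB, hy⟩
      have hle : (2 : ℝ) ^ (k - 1) ≤ (2 : ℝ) ^ k :=
        zpow_le_zpow_right₀ one_le_two (by omega)
      have habs : |y| ≤ (2 : ℝ) ^ (k - 1) := abs_le.mpr hy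
      refine ⟨⟨hxB, ?_⟩, hxB.1, lt_of_le_of_lt habs hxB.2.2⟩
      have h1 := hy.1
      have h2 := hy.2
      exact ⟨by linarith, by linarith⟩
    -- relate F to E on Rk : Rk ∩ F =ᵐ Rk ∩ E⁺ = Rk ∩ E
    have hRE : Rk f k ∩ {p : R2 | 0 < p.1 ∧ p ∈ E} = Rk f k ∩ E := by
      ext p
      simp only [mem_inter_iff, mem_setOf_eq, Rk, mem_prod]
      exact ⟨fun ⟨h1, h2⟩ => ⟨h1, h2.2⟩, fun ⟨h1, h2⟩ => ⟨h1, h1.1.1, h2⟩⟩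
    have hvolRF : volume (Rk f k ∩ {p : R2 | 0 < p.1 ∧ |p.2| < f p.1})
        = volume (Rk f k ∩ E) := by
      rw [← hRE]
      exact (measure_congr (ae_eq_set_inter (Filter.EventuallyEq.refl _ _) hae)).symm
    have hvolS : volume (B ×ˢ Icc (-(2 : ℝ) ^ (k - 1)) ((2 : ℝ) ^ (k - 1)))
        = volume B * ENNReal.ofReal ((2 : ℝ) ^ k) := by
      rw [Measure.volume_eq_prod, Measure.prod_prod, Real.volume_Icc]
      congr 1
      rw [← hdouble]; ring_nf
    have hvolR : volume (Rk f k)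
        = volume B * ENNReal.ofReal ((2 : ℝ) * (2 : ℝ) ^ k) := by
      rw [Rk, Measure.volume_eq_prod, Measure.prod_prod, Real.volume_Icc]
      congr 1
      ring_nf
    calc volume (Rk f k) = volume B * ENNReal.ofReal ((2 : ℝ) * (2 : ℝ) ^ k) := hvolR
      _ = 2 * (volume B * ENNReal.ofReal ((2 : ℝ) ^ k)) := by
          rw [ENNReal.ofReal_mul (by norm_num : (0:ℝ) ≤ 2)]
          rw [ENNReal.ofReal_ofNat]
          ring
      _ = 2 * volume (B ×ˢ Icc (-(2 : ℝ) ^ (k - 1)) ((2 : ℝ) ^ (k - 1))) := by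
          rw [hvolS]
      _ ≤ 2 * volume (Rk f k ∩ {p : R2 | 0 < p.1 ∧ |p.2| < f p.1}) :=
          mul_le_mul_right (measure_mono hS) 2
      _ = 2 * volume (Rk f k ∩ E) := by rw [hvolRF]
  -- part 4
  have part4 : ∑' k : ℤ, volume (Rk f k) ≤ volume E := by
    have h1 : ∑' k : ℤ, volume (Rk f k) ≤ ∑' k : ℤ, 2 * volume (Rk f k ∩ E) :=
      ENNReal.tsum_le_tsum fun k => part3 k
    have h2 : ∑' k : ℤ, 2 * volume (Rk f k ∩ E)
        = 2 * volume (⋃ k : ℤ, Rk f k ∩ E) := by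
      rw [ENNReal.tsum_mul_left]
      congr 1
      exact (measure_iUnion (hdisj.mono fun k l h => h.mono inter_subset_left
        inter_subset_left) fun k => (hRmeas k).inter hE).symm
    have h3 : (⋃ k : ℤ, Rk f k ∩ E) ⊆ {p : R2 | 0 < p.1 ∧ p ∈ E} := by
      rintro p hp
      obtain ⟨k, hk⟩ := mem_iUnion.mp hp
      exact ⟨hk.1.1.1, hk.2⟩
    calc ∑' k : ℤ, volume (Rk f k) ≤ 2 * volume (⋃ k : ℤ, Rk f k ∩ E) :=
          le_trans h1 (le_of_eq h2)
      _ ≤ 2 * volume ({p : R2 | 0 < p.1 ∧ p ∈ E}) :=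
          mul_le_mul_right (measure_mono h3) 2
      _ = volume E := hEhalf.symm
  exact ⟨part1, part2, part3, part4⟩

end
end
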